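/- arXiv:2409.09547 — 12 statements merged into one kernel-verified Lean document; each statement's English description precedes it below -/
import Mathlib

section
/- For all n ≥ 0, the coefficient of x^n in c(x)^k·x^k equals binomial(2n-k-1, n-k)·k/n for n ≥ k ≥ 1 (the ballot numbers), where c is the Catalan generating function; equivalently, [x^n] (x·c(x))^k = (k/(2n-k))·binomial(2n-k, n-k) for 1 ≤ k ≤ n. -/
open PowerSeries

private noncomputable def Cg : PowerSeries ℚ := PowerSeries.mk fun m => (catalan m : ℚ)

private lemma Cg_eq : Cg = 1 + X * Cg ^ 2 := by
  ext n
  cases n with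
  | zero => simp [Cg]
  | succ n =>
    rw [map_add, coeff_succ_X_mul, sq, coeff_mul]
    simp only [Cg, coeff_mk, coeff_one, Nat.succ_ne_zero, if_false, zero_add, catalan_succ' n]
    push_cast
    rfl

private lemma F_sq : (X * Cg) ^ 2 = X * Cg - X := by
  linear_combination (-X : PowerSeries ℚ) * Cg_eq

private lemma rat_step (a b jq dq : ℚ) (hj : 0 ≤ jq) (hd : 0 ≤ dq)
    (hkey : b * (dq + 1) = a * (jq + dq + 2)) :
    (a + b) * (jq + 2) / (jq + 3 + dq) - b * (jq + 1) / (jq + 2 + dq)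
      = a * (jq + 3) / (jq + 3 + dq) := by
  have h1 : jq + 3 + dq ≠ 0 := by positivity
  have h2 : jq + 2 + dq ≠ 0 := by positivity
  have h3 : (a + b) * (jq + 2) * (jq + 2 + dq) - b * (jq + 1) * (jq + 3 + dq)
      = a * (jq + 3) * (jq + 2 + dq) := by linear_combination hkey
  rw [div_sub_div _ _ h1 h2, div_eq_div_iff (mul_ne_zero h1 h2) h1]
  linear_combination (jq + 3 + dq) * h3

private lemma aux : ∀ j d : ℕ, (coeff (R := ℚ) (j + 1 + d)) ((X * Cg) ^ (j + 1)) =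
    (Nat.choose (j + 2 * d) d : ℚ) * (j + 1) / (j + 1 + d) := by
  intro j
  induction j using Nat.strong_induction_on with
  | _ j ih =>
    match j with
    | 0 =>
      intro d
      rw [pow_one, show 0 + 1 + d = d + 1 by ring, coeff_succ_X_mul]
      simp only [Cg, coeff_mk]
      have h := succ_mul_catalan_eq_centralBinom d
      rw [Nat.centralBinom] at h
      have h' := congrArg (Nat.cast : ℕ → ℚ) h
      rw [show (0:ℕ) + 2 * d = 2 * d by ring]
      push_cast at h' ⊢
      have hd : ((d : ℚ) + 1) ≠ 0 := by positivity
      field_simp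
      linarith [h']
    | 1 =>
      intro d
      rw [F_sq, map_sub, show 1 + 1 + d = (d + 1) + 1 by ring, coeff_succ_X_mul]
      simp only [Cg, coeff_mk, coeff_X]
      rw [if_neg (by omega), show 1 + 2 * d = 2 * d + 1 by ring]
      have h := succ_mul_catalan_eq_centralBinom (d + 1)
      rw [Nat.centralBinom, show 2 * (d + 1) = (2 * d + 1) + 1 by ring,
        show d + 1 + 1 = (d + 1) + 1 by ring, Nat.choose_succ_succ,
        Nat.choose_symm_half] at h
      have h' := congrArg (Nat.cast : ℕ → ℚ) h
      push_cast at h' ⊢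
      have hd : ((d : ℚ) + 1 + 1) ≠ 0 := by positivity
      field_simp
      linarith [h']
    | (j + 2) =>
      intro d
      have hpow : (X * Cg) ^ (j + 2 + 1) = (X * Cg) ^ (j + 2) - (X * Cg) ^ (j + 1) * X := by
        have h : (X * Cg) ^ (j + 2 + 1) = (X * Cg) ^ (j + 1) * ((X * Cg) ^ 2) := by ring
        rw [h, F_sq]; ring
      rw [hpow, map_sub, show j + 2 + 1 + d = (j + 2 + d) + 1 by ring, coeff_succ_mul_X]
      have e1 := ih (j + 1) (by omega) (d + 1)
      have e2 := ih j (by omega) (d + 1)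
      rw [show j + 1 + 1 + (d + 1) = j + 2 + d + 1 by ring] at e1
      rw [show j + 1 + (d + 1) = j + 2 + d by ring] at e2
      rw [e1, e2]
      rw [show j + 1 + 2 * (d + 1) = (j + 2 + 2 * d) + 1 by ring,
        Nat.choose_succ_succ (j + 2 + 2 * d) d] at e1 ⊢
      rw [show j + 2 * (d + 1) = j + 2 + 2 * d by ring] at e2 ⊢
      simp only [Nat.succ_eq_add_one]
      have hkey : ((Nat.choose (j + 2 + 2 * d) (d + 1) : ℚ)) * ((d : ℚ) + 1)
          = ((Nat.choose (j + 2 + 2 * d) d : ℚ)) * ((j : ℚ) + (d : ℚ) + 2) := by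
        have hh := Nat.choose_succ_right_eq (j + 2 + 2 * d) d
        rw [show j + 2 + 2 * d - d = j + d + 2 by omega] at hh
        exact_mod_cast congrArg (Nat.cast : ℕ → ℚ) hh
      have := rat_step (Nat.choose (j + 2 + 2 * d) d : ℚ)
        (Nat.choose (j + 2 + 2 * d) (d + 1) : ℚ) j d
        (by positivity) (by positivity) hkey
      push_cast
      push_cast at this
      linear_combination this
  
private lemma aux2 (j d : ℕ) :
    (Nat.choose (j + 2 * d) d : ℚ) * (j + 1) / (j + 1 + d)
      = ((j : ℚ) + 1) / ((j : ℚ) + 1 + 2 * d) * (Nat.choose (j + 1 + 2 * d) d : ℚ) := by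
  have hsymm1 : Nat.choose (j + 2 * d) (j + d) = Nat.choose (j + 2 * d) d := by
    have h := Nat.choose_symm (n := j + 2 * d) (k := d) (by omega)
    rwa [show j + 2 * d - d = j + d by omega] at h
  have hsymm2 : Nat.choose (j + 1 + 2 * d) (j + d + 1) = Nat.choose (j + 1 + 2 * d) d := by
    have h := Nat.choose_symm (n := j + 1 + 2 * d) (k := d) (by omega)
    rwa [show j + 1 + 2 * d - d = j + d + 1 by omega] at h
  have key : (j + 1 + 2 * d) * Nat.choose (j + 2 * d) d
      = Nat.choose (j + 1 + 2 * d) d * (j + d + 1) := by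
    have h0 := Nat.add_one_mul_choose_eq (j + 2 * d) (j + d)
    rw [hsymm1, show j + 2 * d + 1 = j + 1 + 2 * d by omega,
      show j + d + 1 = j + d + 1 by omega, hsymm2] at h0
    exact h0
  have keyQ : ((j : ℚ) + 1 + 2 * d) * (Nat.choose (j + 2 * d) d : ℚ)
      = (Nat.choose (j + 1 + 2 * d) d : ℚ) * ((j : ℚ) + d + 1) := by
    exact_mod_cast congrArg (Nat.cast : ℕ → ℚ) key
  have hD1 : ((j : ℚ) + 1 + d) ≠ 0 := by positivity
  have hD2 : ((j : ℚ) + 1 + 2 * d) ≠ 0 := by positivity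
  field_simp
  ring_nf
  ring_nf at keyQ
  linear_combination keyQ

/-- Ballot numbers: for `1 ≤ k ≤ n`,
`[xⁿ] (x·c(x))ᵏ = C(2n-k-1, n-k)·k/n = (k/(2n-k))·C(2n-k, n-k)`. -/
theorem coeff_xc_pow (n k : ℕ) (hk : 1 ≤ k) (hkn : k ≤ n) :
    (coeff (R := ℚ) n) ((X * PowerSeries.mk fun m => (catalan m : ℚ)) ^ k) =
        (Nat.choose (2 * n - k - 1) (n - k) : ℚ) * k / n ∧
      (coeff (R := ℚ) n) ((X * PowerSeries.mk fun m => (catalan m : ℚ)) ^ k) =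
        (k : ℚ) / ((2 * n - k : ℕ) : ℚ) * (Nat.choose (2 * n - k) (n - k) : ℚ) := by
  obtain ⟨j, rfl⟩ : ∃ j, k = j + 1 := ⟨k - 1, by omega⟩
  obtain ⟨d, rfl⟩ : ∃ d, n = j + 1 + d := ⟨n - (j + 1), by omega⟩
  have h := aux j d
  have hCg : (PowerSeries.mk fun m => (catalan m : ℚ)) = Cg := rfl
  rw [hCg]
  rw [show 2 * (j + 1 + d) - (j + 1) - 1 = j + 2 * d by omega,
    show j + 1 + d - (j + 1) = d by omega,
    show 2 * (j + 1 + d) - (j + 1) = j + 1 + 2 * d by omega]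
  constructor
  · rw [h]; push_cast; ring_nf
  · rw [h, aux2 j d]; push_cast; ring_nf
end

section
/- Define the lower-triangular matrix t with t(n,k) = ∑_{j=0}^{n-k} binomial(k+2j, j) for k ≤ n and t(n,k) = 0 otherwise. Then for all n, k with k ≤ n, the generating function identity holds: t(n,k) = [x^n] (1/((1-x)·sqrt(1-4x)))·(x·c(x))^k, where c(x) is the Catalan generating function. -/
open PowerSeries

lemma coeff_const_mul (a : ℚ) (g : PowerSeries ℚ) (n : ℕ) :
    coeff n ((C a) * g) = a * coeff n g := by simp

lemma two_eq_CC : (2 : PowerSeries ℚ) = C 2 := (map_ofNat (C (R := ℚ)) 2).symm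
lemma four_eq_CC : (4 : PowerSeries ℚ) = C 4 := (map_ofNat (C (R := ℚ)) 4).symm

lemma two_ne_zero'' : (2 : PowerSeries ℚ) ≠ 0 := by
  intro h
  have := congrArg (constantCoeff (R := ℚ)) h
  rw [two_eq_CC] at this
  simp at this

lemma four_ne_zero'' : (4 : PowerSeries ℚ) ≠ 0 := by
  intro h
  have := congrArg (constantCoeff (R := ℚ)) h
  rw [four_eq_CC] at this
  simp at this

/-- The power series `1/√(1-4x) = ∑ C(2m,m) xᵐ`. -/
noncomputable def Dq : PowerSeries ℚ := PowerSeries.mk fun m => (Nat.centralBinom m : ℚ)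

lemma coeff_Dq (m : ℕ) : (coeff m) Dq = (Nat.centralBinom m : ℚ) := by
  simp [Dq]

/-- The geometric series `1/(1-x)`. -/
noncomputable def OneGeo : PowerSeries ℚ := PowerSeries.mk fun _ => (1 : ℚ)

lemma coeff_OneGeo (m : ℕ) : (coeff m) OneGeo = 1 := by simp [OneGeo]

lemma Dq_ode : (1 - 4 * X) * (d⁄dX ℚ Dq) = 2 * Dq := by
  have h : (1 - 4 * X) * (d⁄dX ℚ Dq) = d⁄dX ℚ Dq - C 4 * (X * d⁄dX ℚ Dq) := by
    rw [← four_eq_CC]; ring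
  rw [h, two_eq_CC]
  ext n
  rw [map_sub, coeff_const_mul, coeff_const_mul]
  cases n with
  | zero =>
    rw [coeff_zero_X_mul, coeff_derivative, coeff_Dq, coeff_Dq]
    norm_num [Nat.centralBinom]
  | succ n =>
    rw [coeff_succ_X_mul, coeff_derivative, coeff_derivative, coeff_Dq, coeff_Dq]
    have key2 := Nat.succ_mul_centralBinom_succ (n + 1)
    have key2q : ((n : ℚ) + 1 + 1) * (Nat.centralBinom (n + 1 + 1) : ℚ) =
        2 * (2 * ((n : ℚ) + 1) + 1) * (Nat.centralBinom (n + 1) : ℚ) := by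
      exact_mod_cast congrArg (Nat.cast (R := ℚ)) key2
    push_cast
    nlinarith [key2q]

lemma deriv_one_sub_four_X : d⁄dX ℚ (1 - 4 * X) = -4 := by
  have h : (1 : PowerSeries ℚ) - 4 * X = 1 - (X + X + X + X) := by ring
  rw [h, map_sub, map_add, map_add, map_add, derivative_X, Derivation.map_one_eq_zero]
  ring

/-- `(2(m+1)).choose (m+1) = 2 * (2m+1).choose m` -/
lemma central_half (m : ℕ) :
    (2 * (m + 1)).choose (m + 1) = 2 * (2 * m + 1).choose m := by
  have h1 : 2 * (m + 1) = (2 * m + 1) + 1 := by ring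
  rw [h1, Nat.choose_succ_succ, Nat.choose_symm_half]
  ring

lemma one_sub_four_X_ne : ((1 : PowerSeries ℚ) - 4 * X) ≠ 0 := by
  intro h
  have := congrArg (constantCoeff (R := ℚ)) h
  simp [four_eq_CC] at this

lemma hOneGeo : ((1 : PowerSeries ℚ) - X) * OneGeo = 1 := by
  have h : ((1 : PowerSeries ℚ) - X) * OneGeo = OneGeo - X * OneGeo := by ring
  rw [h]
  ext n
  cases n with
  | zero =>
    rw [map_sub, coeff_zero_X_mul, coeff_OneGeo]
    simp
  | succ n =>
    rw [map_sub, coeff_succ_X_mul, coeff_OneGeo, coeff_OneGeo, coeff_one]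
    simp

/-- For `k ≤ n`, `∑_{j=0}^{n-k} C(k+2j, j) = [xⁿ] (1/((1-x)·√(1-4x)))·(x·c(x))ᵏ`,
where `s = √(1-4x)` is the power series with constant term `1` squaring to `1-4x`,
and `f = x·c(x) = (1-s)/2` with `c` the Catalan generating function. -/
theorem riordan_R1_entries (s f : PowerSeries ℚ)
    (hs0 : constantCoeff s = 1) (hs : s ^ 2 = 1 - 4 * X)
    (hf : 2 * f = 1 - s) (n k : ℕ) (hkn : k ≤ n) :
    (∑ j ∈ Finset.range (n - k + 1), (Nat.choose (k + 2 * j) j : ℚ)) =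
      (coeff n) (((1 - X) * s)⁻¹ * f ^ k) := by
  -- s * s' = -2
  have hds : s * d⁄dX ℚ s = -2 := by
    have h1 : d⁄dX ℚ (s ^ 2) = d⁄dX ℚ (1 - 4 * X) := by rw [hs]
    have h2 : d⁄dX ℚ (s ^ 2) = 2 * (s * d⁄dX ℚ s) := by
      rw [sq, Derivation.leibniz, smul_eq_mul]; ring
    rw [h2, deriv_one_sub_four_X] at h1
    have h4 : (2 : PowerSeries ℚ) * (s * d⁄dX ℚ s - (-2)) = 0 := by
      rw [mul_sub, h1]; ring
    rcases mul_eq_zero.mp h4 with h | h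
    · exact absurd h two_ne_zero''
    · exact sub_eq_zero.mp h
  -- s * Dq = 1
  have hP1 : s * Dq = 1 := by
    have hdP : d⁄dX ℚ (s * Dq) = 0 := by
      have e2 : (1 - 4 * X) * d⁄dX ℚ s = -2 * s := by
        rw [← hs]
        have h : s ^ 2 * d⁄dX ℚ s = s * (s * d⁄dX ℚ s) := by ring
        rw [h, hds]; ring
      have e1 : (1 - 4 * X) * d⁄dX ℚ (s * Dq) = 0 := by
        rw [Derivation.leibniz, smul_eq_mul]
        calc (1 - 4*X) * (s * d⁄dX ℚ Dq + Dq * d⁄dX ℚ s)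
            = s * ((1 - 4*X) * d⁄dX ℚ Dq) + Dq * ((1 - 4*X) * d⁄dX ℚ s) := by ring
          _ = s * (2 * Dq) + Dq * (-2 * s) := by rw [Dq_ode, e2]
          _ = 0 := by ring
      rcases mul_eq_zero.mp e1 with h | h
      · exact absurd h one_sub_four_X_ne
      · exact h
    apply derivative.ext (g := 1)
    · rw [hdP, Derivation.map_one_eq_zero]
    · rw [map_mul, hs0, map_one]
      simp [Dq, Nat.centralBinom]
  -- inverse computation
  have hc : constantCoeff ((1 - X) * s : PowerSeries ℚ) ≠ 0 := by
    rw [map_mul, map_sub, hs0]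
    simp
  have hinv : ((1 - X) * s : PowerSeries ℚ)⁻¹ = OneGeo * Dq := by
    rw [PowerSeries.inv_eq_iff_mul_eq_one hc]
    calc (OneGeo * Dq) * ((1 - X) * s) = ((1 - X) * OneGeo) * (s * Dq) := by ring
      _ = 1 := by rw [hOneGeo, hP1, mul_one]
  -- f² = f - X
  have hf2 : f ^ 2 = f - X := by
    have h1 : (4 : PowerSeries ℚ) * (f ^ 2 - (f - X)) = 0 := by
      calc (4 : PowerSeries ℚ) * (f ^ 2 - (f - X))
          = (2*f)^2 - (2*(2*f) - 4*X) := by ring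
        _ = (1-s)^2 - (2*(1-s) - 4*X) := by rw [hf]
        _ = s^2 - (1 - 4*X) := by ring
        _ = 0 := by rw [hs]; ring
    rcases mul_eq_zero.mp h1 with h | h
    · exact absurd h four_ne_zero''
    · exact sub_eq_zero.mp h
  -- key: coeff n (f^k * Dq) = if k ≤ n then C(2n-k, n-k) else 0
  have key : ∀ k n : ℕ, coeff n (f ^ k * Dq) =
      if k ≤ n then ((2 * n - k).choose (n - k) : ℚ) else 0 := by
    intro k
    induction k using Nat.strong_induction_on with
    | _ k ih =>
      match k with
      | 0 =>
        intro n
        rw [pow_zero, one_mul, coeff_Dq, if_pos (Nat.zero_le n)]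
        simp [Nat.centralBinom]
      | 1 =>
        intro n
        have h1 : (2 : PowerSeries ℚ) * (f * Dq) = Dq - 1 := by
          calc (2 : PowerSeries ℚ) * (f * Dq) = (2*f)*Dq := by ring
            _ = (1-s)*Dq := by rw [hf]
            _ = Dq - s*Dq := by ring
            _ = Dq - 1 := by rw [hP1]
        have h2 : 2 * coeff n (f * Dq) = coeff n Dq - coeff n 1 := by
          rw [← map_sub, ← h1, two_eq_CC, coeff_const_mul]
        rw [pow_one]
        cases n with
        | zero =>
          have h3 : (2 : ℚ) * coeff 0 (f * Dq) = 0 := by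
            rw [h2, coeff_Dq, coeff_one]
            norm_num [Nat.centralBinom_zero]
          rw [if_neg (by omega)]
          linarith
        | succ m =>
          rw [coeff_Dq, coeff_one] at h2
          simp only [Nat.succ_ne_zero, if_false, if_neg] at h2
          rw [if_pos (by omega)]
          have hch : Nat.centralBinom (m + 1) = 2 * (2 * m + 1).choose m :=
            central_half m
          have e1 : 2 * (m + 1) - 1 = 2 * m + 1 := by omega
          have e2 : m + 1 - 1 = m := by omega
          rw [e1, e2]
          rw [hch] at h2
          push_cast at h2 ⊢
          linarith
      | (k + 2) =>
        intro n
        have e : f ^ (k + 2) * Dq = f ^ (k + 1) * Dq - X * (f ^ k * Dq) := by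
          have h : f ^ (k + 2) = f ^ 2 * f ^ k := by ring
          rw [h, hf2]; ring
        rw [e, map_sub]
        cases n with
        | zero =>
          rw [coeff_zero_X_mul, ih (k+1) (by omega) 0]
          rw [if_neg (by omega), if_neg (by omega)]
          ring
        | succ m =>
          rw [coeff_succ_X_mul, ih (k+1) (by omega) (m+1), ih k (by omega) m]
          by_cases hk1 : k + 1 ≤ m
          · obtain ⟨a, rfl⟩ : ∃ a, m = k + 1 + a := ⟨m - (k+1), by omega⟩
            rw [if_pos (by omega), if_pos (by omega), if_pos (by omega)]
            have e1 : 2 * (k + 1 + a + 1) - (k + 1) = (k + 2*a + 2) + 1 := by omega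
            have e2 : (k + 1 + a + 1) - (k + 1) = a + 1 := by omega
            have e3 : 2 * (k + 1 + a) - k = k + 2*a + 2 := by omega
            have e4 : (k + 1 + a) - k = a + 1 := by omega
            have e5 : 2 * (k + 1 + a + 1) - (k + 2) = k + 2*a + 2 := by omega
            have e6 : (k + 1 + a + 1) - (k + 2) = a := by omega
            rw [e1, e2, e3, e4, e5, e6]
            have pas := Nat.choose_succ_succ (k + 2*a + 2) a
            push_cast [pas]
            ring
          · by_cases hk2 : k ≤ m
            · have hkm : k = m := by omega
              subst hkm
              rw [if_pos (le_refl (k+1)), if_pos (le_refl k), if_neg (by omega)]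
              norm_num [Nat.sub_self]
            · rw [if_neg (by omega), if_neg (by omega), if_neg (by omega)]
              ring
  -- final assembly
  rw [hinv]
  have hre : OneGeo * Dq * f ^ k = OneGeo * (f ^ k * Dq) := by ring
  rw [hre, coeff_mul]
  rw [Finset.Nat.sum_antidiagonal_eq_sum_range_succ_mk]
  simp only [coeff_OneGeo, one_mul, Nat.succ_eq_add_one]
  have hr := Finset.sum_range_reflect (fun i => coeff i (f ^ k * Dq)) (n + 1)
  simp only [Nat.add_sub_cancel] at hr
  rw [hr]
  simp only [key]
  have hfil : (Finset.range (n + 1)).filter (fun m => k ≤ m) = Finset.Ico k (n + 1) := by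
    ext m
    simp only [Finset.mem_filter, Finset.mem_range, Finset.mem_Ico]
    omega
  rw [← Finset.sum_filter, hfil, Finset.sum_Ico_eq_sum_range]
  have hlen : n + 1 - k = n - k + 1 := by omega
  rw [hlen]
  apply Finset.sum_congr rfl
  intro j hj
  have e1 : 2 * (k + j) - k = k + 2 * j := by omega
  have e2 : (k + j) - k = j := by omega
  rw [e1, e2]
end

section
/- For any natural number r ≥ 1, the entries t(n,k) = ∑_{j=0}^{n-k} r^{n-j-k}·binomial(k+2j, j) (for k ≤ n, else 0) satisfy t(n,k) = [x^n] (1/((1-rx)·sqrt(1-4x)))·(x·c(x))^k. -/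
open PowerSeries

open Finset

private def cb (i : ℕ) : ℚ := (Nat.centralBinom i : ℚ)

private def Scb (n : ℕ) : ℚ := ∑ i ∈ range (n+1), cb i * cb (n - i)

private lemma cb_sym (n : ℕ) :
    ∑ i ∈ range (n+1), (i : ℚ) * cb i * cb (n - i) = (n : ℚ) / 2 * Scb n := by
  have key : ∑ i ∈ range (n+1), (i : ℚ) * cb i * cb (n - i)
      = ∑ i ∈ range (n+1), ((n : ℚ) - i) * cb (n - i) * cb i := by
    rw [← Finset.sum_range_reflect (fun i => (i : ℚ) * cb i * cb (n - i)) (n+1)]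
    refine Finset.sum_congr rfl fun i hi => ?_
    have hi' : i ≤ n := by simpa using Nat.lt_succ_iff.mp (Finset.mem_range.mp hi)
    have h1 : n + 1 - 1 - i = n - i := by omega
    have h2 : n - (n - i) = i := by omega
    rw [h1, h2]
    have : ((n - i : ℕ) : ℚ) = (n : ℚ) - i := by push_cast [Nat.cast_sub hi']; ring
    rw [this]
  have expand : ∑ i ∈ range (n+1), ((n : ℚ) - i) * cb (n - i) * cb i
      = (n : ℚ) * Scb n - ∑ i ∈ range (n+1), (i : ℚ) * cb i * cb (n - i) := by
    rw [Scb, Finset.mul_sum, ← Finset.sum_sub_distrib]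
    exact Finset.sum_congr rfl fun i _ => by ring
  have := key.trans expand
  linarith

private lemma Scb_succ (n : ℕ) : Scb (n+1) = 4 * Scb n := by
  have hA : ∑ i ∈ range (n+2), (i : ℚ) * cb i * cb (n + 1 - i)
      = ∑ j ∈ range (n+1), ((j+1 : ℕ) : ℚ) * cb (j+1) * cb (n - j) := by
    rw [Finset.sum_range_succ' (fun i => (i : ℚ) * cb i * cb (n + 1 - i)) (n+1)]
    simp
  have hrec : ∀ j : ℕ, ((j+1 : ℕ) : ℚ) * cb (j+1) = 2 * (2*j+1) * cb j := by
    intro j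
    have := Nat.succ_mul_centralBinom_succ j
    have : ((j+1) * Nat.centralBinom (j+1) : ℚ) = (2 * (2*j+1) * Nat.centralBinom j : ℚ) := by
      exact_mod_cast congrArg (Nat.cast : ℕ → ℚ) this
    push_cast at this ⊢
    simpa [cb] using this
  have hA2 : ∑ j ∈ range (n+1), ((j+1 : ℕ) : ℚ) * cb (j+1) * cb (n - j)
      = 4 * ∑ j ∈ range (n+1), (j : ℚ) * cb j * cb (n - j) + 2 * Scb n := by
    rw [Scb, Finset.mul_sum, Finset.mul_sum, ← Finset.sum_add_distrib]
    refine Finset.sum_congr rfl fun j _ => ?_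
    rw [hrec j]; ring
  have hAval : ∑ i ∈ range (n+2), (i : ℚ) * cb i * cb (n + 1 - i) = (2*n+2) * Scb n := by
    rw [hA, hA2, cb_sym]; ring
  have hsym := cb_sym (n+1)
  rw [hAval] at hsym
  push_cast at hsym
  have hn : ((n:ℚ)+1) ≠ 0 := by positivity
  field_simp at hsym
  nlinarith [hsym, sq_nonneg ((n:ℚ)+1)]


private lemma Scb_eq (n : ℕ) : Scb n = 4 ^ n := by
  induction n with
  | zero => simp [Scb, cb, Nat.centralBinom]
  | succ n ih => rw [Scb_succ, ih]; ring

open PowerSeries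

private lemma geom (q : ℚ) :
    (1 - PowerSeries.C q * X) * PowerSeries.mk (fun n => q ^ n) = (1 : ℚ⟦X⟧) := by
  ext m
  rw [sub_mul, one_mul, map_sub]
  cases m with
  | zero => simp
  | succ m =>
    rw [mul_assoc, coeff_C_mul, coeff_succ_X_mul]
    simp [coeff_mk, pow_succ, mul_comm]

private lemma cbG_sq : (PowerSeries.mk cb) * (PowerSeries.mk cb) = PowerSeries.mk (fun n => (4:ℚ) ^ n) := by
  ext m
  rw [coeff_mul, Finset.Nat.sum_antidiagonal_eq_sum_range_succ (fun i j => (coeff i) (mk cb) * (coeff j) (mk cb)) m]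
  have := Scb_eq m
  rw [Scb] at this
  simpa [coeff_mk] using this

private lemma sG_eq_one (s : ℚ⟦X⟧) (hs0 : constantCoeff s = 1) (hs : s ^ 2 = 1 - 4 * X) :
    s * PowerSeries.mk cb = 1 := by
  set u := s * PowerSeries.mk cb with hu
  have hfourX : (4 : ℚ⟦X⟧) * X = PowerSeries.C 4 * X := by
    rw [show ((4:ℚ⟦X⟧) = PowerSeries.C 4) from by simp [map_ofNat]]
  have husq : u ^ 2 = 1 := by
    have : u ^ 2 = s ^ 2 * ((mk cb) * (mk cb)) := by ring
    rw [this, cbG_sq, hs, hfourX]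
    exact geom 4
  have hu0 : constantCoeff u = 1 := by
    rw [hu, map_mul, hs0, one_mul]
    simp [cb, Nat.centralBinom, constantCoeff_mk]
  have hfact : (u - 1) * (u + 1) = 0 := by
    have h2 : (u - 1) * (u + 1) = u ^ 2 - 1 := by ring
    rw [h2, husq, sub_self]
  rcases mul_eq_zero.mp hfact with h | h
  · exact sub_eq_zero.mp h
  · exfalso
    have := congrArg (constantCoeff) h
    rw [map_add, hu0, map_one] at this
    norm_num at this

private def ak (k m : ℕ) : ℚ := if k ≤ m then ((k + 2*(m-k)).choose (m-k) : ℚ) else 0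

private lemma ak0 : PowerSeries.mk (ak 0) = PowerSeries.mk cb := by
  ext m
  simp [ak, cb, coeff_mk, Nat.centralBinom, two_mul]

private lemma ak1 : 2 * PowerSeries.mk (ak 1) = PowerSeries.mk (ak 0) - 1 := by
  ext m
  rw [map_sub, coeff_one]
  cases m with
  | zero => simp [ak, coeff_mk]
  | succ m =>
    rw [show ((2:ℚ⟦X⟧) = PowerSeries.C 2) from by simp [map_ofNat], coeff_C_mul]
    simp only [coeff_mk, ak, if_pos (show (1:ℕ) ≤ m+1 by omega),
      if_pos (show (0:ℕ) ≤ m+1 by omega)]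
    have h1 : m + 1 - 1 = m := rfl
    have h2 : m + 1 - 0 = m + 1 := rfl
    rw [h1, h2]
    have hch : (0 + 2*(m+1)).choose (m+1) = 2 * ((1 + 2*m).choose m) := by
      have e1 : 0 + 2*(m+1) = (1 + 2*m) + 1 := by omega
      have e2 : (1 + 2*m).choose (m+1) = (1+2*m).choose m := by
        have := Nat.choose_symm (show m ≤ 1 + 2*m by omega)
        have e3 : 1 + 2*m - m = m + 1 := by omega
        rw [e3] at this
        exact this
      rw [e1, Nat.choose_succ_succ, e2]
      omega
    rw [hch]
    push_cast
    ring

private lemma ak_rec (k : ℕ) :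
    PowerSeries.mk (ak (k+2)) = PowerSeries.mk (ak (k+1)) - X * PowerSeries.mk (ak k) := by
  ext m
  rw [map_sub]
  cases m with
  | zero =>
    simp [ak, coeff_mk, PowerSeries.coeff_zero_eq_constantCoeff]
  | succ m =>
    rw [coeff_succ_X_mul]
    simp only [coeff_mk, ak]
    rcases lt_trichotomy m k with h | h | h
    · -- m + 1 ≤ k+1, all ifs false
      rw [if_neg (by omega), if_neg (by omega), if_neg (by omega)]
      ring
    · -- m = k : m+1 = k+1
      subst h
      rw [if_neg (by omega), if_pos (by omega), if_pos (by omega)]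
      have e1 : m + 1 - (m+1) = 0 := by omega
      have e2 : m - m = 0 := by omega
      rw [e1, e2]
      simp
    · -- m > k, i.e. m + 1 ≥ k + 2
      rw [if_pos (by omega), if_pos (by omega), if_pos (by omega)]
      have e1 : m + 1 - (k+2) = m - k - 1 := by omega
      have e2 : m + 1 - (k+1) = m - k := by omega
      have e3 : m - k = (m - k - 1) + 1 := by omega
      set j := m - k - 1 with hj
      have e4 : k + 2 + 2 * (m + 1 - (k+2)) = (k + 2*j + 2) := by omega
      have e5 : k + 1 + 2 * (m + 1 - (k+1)) = (k + 2*j + 2) + 1 := by omega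
      have e6 : k + 2 * (m - k) = k + 2*j + 2 := by omega
      rw [e4, e5, e6, e2, e3, e1]
      rw [Nat.choose_succ_succ (k + 2*j + 2) j]
      push_cast
      ring

private lemma s_mul_ak (s f : PowerSeries ℚ)
    (hs0 : constantCoeff s = 1) (hs : s ^ 2 = 1 - 4 * X)
    (hf : 2 * f = 1 - s) (k : ℕ) :
    s * PowerSeries.mk (ak k) = f ^ k := by
  have two_ne : (2 : ℚ⟦X⟧) ≠ 0 := by
    intro h
    have := congrArg (constantCoeff) h
    rw [map_ofNat, map_zero] at this
    norm_num at this
  have hf2 : f ^ 2 = f - X := by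
    have h4 : (2:ℚ⟦X⟧) * (2 * (f ^ 2)) = 2 * (2 * (f - X)) := by
      have : (2 * f) * (2 * f) = (1 - s) * (1 - s) := by rw [hf]
      have hexp : 4 * (f^2) = 1 - 2*s + s^2 := by
        calc 4 * (f^2) = (2*f) * (2*f) := by ring
        _ = (1-s)*(1-s) := this
        _ = 1 - 2*s + s^2 := by ring
      rw [hs] at hexp
      have : 4 * (f ^2) = 2 * (1 - s) - 4 * X := by rw [hexp]; ring
      rw [← hf] at this
      calc (2:ℚ⟦X⟧) * (2 * (f^2)) = 4 * (f^2) := by ring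
      _ = 2 * (2*f) - 4*X := this
      _ = 2 * (2 * (f - X)) := by ring
    exact mul_left_cancel₀ two_ne (mul_left_cancel₀ two_ne h4)
  induction k using Nat.strong_induction_on with
  | _ k ih =>
    match k with
    | 0 =>
      rw [ak0, pow_zero]
      exact sG_eq_one s hs0 hs
    | 1 =>
      have h2 : (2:ℚ⟦X⟧) * (s * PowerSeries.mk (ak 1)) = 2 * f := by
        calc (2:ℚ⟦X⟧) * (s * PowerSeries.mk (ak 1)) = s * (2 * PowerSeries.mk (ak 1)) := by ring
        _ = s * (PowerSeries.mk (ak 0) - 1) := by rw [ak1]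
        _ = s * PowerSeries.mk (ak 0) - s := by ring
        _ = 1 - s := by rw [ak0, sG_eq_one s hs0 hs]
        _ = 2 * f := hf.symm
      have := mul_left_cancel₀ two_ne h2
      rw [this, pow_one]
    | (k+2) =>
      have h0 := ih k (by omega)
      have h1 := ih (k+1) (by omega)
      rw [ak_rec k, mul_sub]
      rw [show s * (X * PowerSeries.mk (ak k)) = X * (s * PowerSeries.mk (ak k)) by ring]
      rw [h0, h1]
      calc f ^ (k+1) - X * f ^ k = f ^ k * (f - X) := by ring
      _ = f ^ k * f ^ 2 := by rw [hf2]
      _ = f ^ (k+2) := by ring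

/-- For `r ≥ 1` and `k ≤ n`,
`∑_{j=0}^{n-k} r^{n-j-k}·C(k+2j, j) = [xⁿ] (1/((1-rx)·√(1-4x)))·(x·c(x))ᵏ`. -/
theorem riordan_Rr_entries (r : ℕ) (hr : 1 ≤ r) (s f : PowerSeries ℚ)
    (hs0 : constantCoeff s = 1) (hs : s ^ 2 = 1 - 4 * X)
    (hf : 2 * f = 1 - s) (n k : ℕ) (hkn : k ≤ n) :
    (∑ j ∈ Finset.range (n - k + 1), (r : ℚ) ^ (n - j - k) * (Nat.choose (k + 2 * j) j : ℚ)) =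
      (coeff n) (((1 - (r : ℚ⟦X⟧) * X) * s)⁻¹ * f ^ k) := by
  have hrC : ((r : ℚ⟦X⟧)) = PowerSeries.C (r : ℚ) := by
    rw [map_natCast]
  set H : ℚ⟦X⟧ := PowerSeries.mk (fun n => (r:ℚ) ^ n) with hH
  have hgeom : (1 - (r : ℚ⟦X⟧) * X) * H = 1 := by
    rw [hrC]; exact geom (r:ℚ)
  have hsG := sG_eq_one s hs0 hs
  have hA0 : constantCoeff ((1 - (r : ℚ⟦X⟧) * X) * s) ≠ 0 := by
    rw [map_mul, hs0, mul_one, map_sub, map_one, map_mul, constantCoeff_X, mul_zero, sub_zero]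
    norm_num
  have hinv : ((1 - (r : ℚ⟦X⟧) * X) * s)⁻¹ = H * PowerSeries.mk cb := by
    rw [PowerSeries.inv_eq_iff_mul_eq_one hA0]
    calc H * PowerSeries.mk cb * ((1 - (r : ℚ⟦X⟧) * X) * s)
        = ((1 - (r : ℚ⟦X⟧) * X) * H) * (s * PowerSeries.mk cb) := by ring
      _ = 1 := by rw [hgeom, hsG, mul_one]
  have hcbf : PowerSeries.mk cb * f ^ k = PowerSeries.mk (ak k) := by
    calc PowerSeries.mk cb * f ^ k
        = PowerSeries.mk cb * (s * PowerSeries.mk (ak k)) := by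
          rw [s_mul_ak s f hs0 hs hf k]
      _ = (s * PowerSeries.mk cb) * PowerSeries.mk (ak k) := by ring
      _ = PowerSeries.mk (ak k) := by rw [hsG, one_mul]
  rw [hinv, mul_assoc, hcbf, PowerSeries.coeff_mul,
    Finset.Nat.sum_antidiagonal_eq_sum_range_succ
      (fun i j => (coeff i) H * (coeff j) (PowerSeries.mk (ak k))) n]
  simp only [hH, coeff_mk]
  have hsub : Finset.range (n - k + 1) ⊆ Finset.range (n + 1) := by
    apply Finset.range_subset_range.mpr; omega
  rw [← Finset.sum_subset hsub (fun i hi hni => ?_)]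
  · -- sums over range (n-k+1)
    rw [← Finset.sum_range_reflect
      (fun j => (r : ℚ) ^ (n - j - k) * ((k + 2 * j).choose j : ℚ)) (n - k + 1)]
    refine Finset.sum_congr rfl fun i hi => ?_
    have hi' : i ≤ n - k := by have := Finset.mem_range.mp hi; omega
    have e1 : n - k + 1 - 1 - i = n - k - i := by omega
    have e2 : n - (n - k - i) - k = i := by omega
    have e3 : ak k (n - i) = ((k + 2 * (n - k - i)).choose (n - k - i) : ℚ) := by
      rw [ak, if_pos (show k ≤ n - i by omega)]
      congr 2 <;> omega
    rw [e1, e2, e3]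
  · -- vanishing terms
    have : ¬ k ≤ n - i := by
      have h1 := Finset.mem_range.mp hi
      have h2 : ¬ i < n - k + 1 := fun h => hni (Finset.mem_range.mpr h)
      omega
    rw [ak, if_neg this, mul_zero]
end

section
/- As formal power series, where c(x) is the generating function of the Catalan numbers and x·c(x) is the compositional inverse of x(1-x), the Riordan array ((1-x)^3 - x^3, x(1-x)) is the Riordan-group inverse of (1/((1-x)·sqrt(1-4x)), x·c(x)); equivalently, 1/((1-x)·sqrt(1-4x)) evaluated at x(1-x) equals 1/((1-x)^3 - x^3). -/
open PowerSeries

/-- Evaluating `1/((1-x)·√(1-4x))` at `x(1-x)` gives `1/((1-x)³ - x³)`: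
with `u = x(1-x)` and `s` the series with constant term `1` and `s² = 1-4u`,
one has `((1-u)·s)⁻¹ = ((1-x)³ - x³)⁻¹`, expressing that `((1-x)³-x³, x(1-x))` is the
Riordan-group inverse of `(1/((1-x)√(1-4x)), x·c(x))`. -/
theorem riordan_R1_inverse (u s : PowerSeries ℚ) (hu : u = X * (1 - X))
    (hs0 : constantCoeff s = 1) (hs : s ^ 2 = 1 - 4 * u) :
    ((1 - u) * s)⁻¹ = ((1 - X) ^ 3 - X ^ 3)⁻¹ := by
  have hs' : s = 1 - 2 * X := by
    have h0 : (s - (1 - 2 * X)) * (s + (1 - 2 * X)) = 0 := by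
      have : s ^ 2 - (1 - 2 * X) ^ 2 = 0 := by rw [hs, hu]; ring
      calc (s - (1 - 2 * X)) * (s + (1 - 2 * X)) = s ^ 2 - (1 - 2 * X) ^ 2 := by ring
        _ = 0 := this
    rcases mul_eq_zero.mp h0 with h | h
    · exact sub_eq_zero.mp h
    · exfalso
      have := congrArg (constantCoeff) h
      simp [hs0] at this
  rw [hs', hu]
  congr 1
  ring
end

section
/- As formal power series, substituting x(1-x) for x in 1/((1-2x)·sqrt(1-4x)) yields 1/((1-x)^4 - x^4); equivalently, the Riordan array (1/((1-2x)·sqrt(1-4x)), x·c(x)) is the Riordan-group inverse of ((1-x)^4 - x^4, x(1-x)). -/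
open PowerSeries

/-- Substituting `x(1-x)` for `x` in `1/((1-2x)·√(1-4x))` yields `1/((1-x)⁴ - x⁴)`:
with `u = x(1-x)` and `s` the series with constant term `1` and `s² = 1-4u`,
one has `((1-2u)·s)⁻¹ = ((1-x)⁴ - x⁴)⁻¹`. -/
theorem riordan_R2_inverse (u s : PowerSeries ℚ) (hu : u = X * (1 - X))
    (hs0 : constantCoeff s = 1) (hs : s ^ 2 = 1 - 4 * u) :
    ((1 - 2 * u) * s)⁻¹ = ((1 - X) ^ 4 - X ^ 4)⁻¹ := by
  have hsq : s ^ 2 = (1 - 2 * X) ^ 2 := by rw [hs, hu]; ring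
  have hfac : (s - (1 - 2 * X)) * (s + (1 - 2 * X)) = 0 := by
    have : s ^ 2 - (1 - 2 * X) ^ 2 = 0 := by rw [hsq]; ring
    calc (s - (1 - 2 * X)) * (s + (1 - 2 * X)) = s ^ 2 - (1 - 2 * X) ^ 2 := by ring
    _ = 0 := this
  have hne : s + (1 - 2 * X) ≠ 0 := by
    intro h
    have := congrArg (constantCoeff) h
    simp [hs0] at this
  have hseq : s = 1 - 2 * X := by
    rcases mul_eq_zero.mp hfac with h | h
    · linear_combination h
    · exact absurd h hne
  rw [hseq, hu]
  congr 1
  ring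
end

section
/- Catalan factorization: for every natural number r, the Riordan array (1/((1-rx)·sqrt(1-4x)), x·c(x)) equals the Riordan product of (c(x), x·c(x)) with ((1-x)/((1-2x)(1-rx+rx^2)), x). Equivalently, as power series: 1/((1-rx)·sqrt(1-4x)) = c(x) · (1-x·c(x))/((1-2x·c(x))·(1-r·x·c(x)+r·(x·c(x))^2)). -/
open PowerSeries

/-- Catalan factorization: for every natural `r`,
`1/((1-rx)·√(1-4x)) = c(x)·(1 - x·c(x)) / ((1 - 2x·c(x))·(1 - r·x·c(x) + r·(x·c(x))²))`,
where `c = (1-√(1-4x))/(2x)` is the Catalan generating function, i.e.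
`2·(x·c) = 1 - s` with `s = √(1-4x)`. -/
theorem catalan_factorization (r : ℕ) (s c : PowerSeries ℚ)
    (hs0 : constantCoeff s = 1) (hs : s ^ 2 = 1 - 4 * X)
    (hc : 2 * (X * c) = 1 - s) :
    ((1 - (r : ℚ⟦X⟧) * X) * s)⁻¹ =
      c * (1 - X * c) *
        ((1 - 2 * (X * c)) * (1 - (r : ℚ⟦X⟧) * (X * c) + (r : ℚ⟦X⟧) * (X * c) ^ 2))⁻¹ := by
  have hsc : s = 1 - 2 * (X * c) := by linear_combination hc
  have hs' : (1 - 2 * (X * c)) ^ 2 = 1 - 4 * X := by rw [← hsc]; exact hs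
  set A : ℚ⟦X⟧ := (1 - (r : ℚ⟦X⟧) * X) * s with hAdef
  set B : ℚ⟦X⟧ :=
    (1 - 2 * (X * c)) * (1 - (r : ℚ⟦X⟧) * (X * c) + (r : ℚ⟦X⟧) * (X * c) ^ 2) with hBdef
  have hA0 : constantCoeff A = 1 := by
    simp [hAdef, hs0]
  have hB0 : constantCoeff B = 1 := by
    simp [hBdef]
  have key : c * (1 - X * c) * A = B := by
    have hX : (X : ℚ⟦X⟧) ≠ 0 := X_ne_zero
    apply mul_left_cancel₀ hX
    apply mul_left_cancel₀ (show (4 : ℚ⟦X⟧) ≠ 0 from fun h => by have := congrArg (constantCoeff) h; rw [map_ofNat, map_zero] at this; norm_num at this)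
    rw [hAdef, hBdef, hsc]
    linear_combination (-(1 - 2 * (X * c))) * hs'
  have hA0' : constantCoeff A ≠ 0 := by rw [hA0]; exact one_ne_zero
  have hB0' : constantCoeff B ≠ 0 := by rw [hB0]; exact one_ne_zero
  symm
  rw [PowerSeries.eq_inv_iff_mul_eq_one hA0']
  calc c * (1 - X * c) * B⁻¹ * A = B⁻¹ * (c * (1 - X * c) * A) := by ring
    _ = B⁻¹ * B := by rw [key]
    _ = 1 := PowerSeries.inv_mul_cancel _ hB0'
end

section
/- Define the square symmetrization of a Riordan array (g,f) with bivariate generating function B(x,y) = g(x)/(1-y·f(x)) to be the bivariate series S(x,y) = B(xy, 1/y) + B(xy, 1/x) - g(xy), so that its entries are S(n,k) = t(n, n-k) for k ≤ n. Prove that for the Riordan array (1/(1+x+x^2), x/(1+x)), the square symmetrization has bivariate generating function 1/((1-y+xy)(1-x+xy)). -/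
open PowerSeries

namespace SqSym

noncomputable def g : ℚ⟦X⟧ := (1 + X + X ^ 2)⁻¹
noncomputable def f : ℚ⟦X⟧ := X * (1 + X)⁻¹
noncomputable def t (n k : ℕ) : ℚ := coeff n (g * f ^ k)

lemma hg : (1 + X + X ^ 2 : ℚ⟦X⟧) * g = 1 :=
  PowerSeries.mul_inv_cancel _ (by simp)

lemma hf : f * (1 + X) = X := by
  rw [f, mul_assoc, PowerSeries.inv_mul_cancel _ (by simp), mul_one]

lemma t_zero {n k : ℕ} (h : n < k) : t n k = 0 := by
  have : g * f ^ k = X ^ k * (g * ((1 + X)⁻¹) ^ k) := by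
    rw [f, mul_pow]; ring
  rw [t, this, coeff_X_pow_mul', if_neg (by omega)]

lemma R1 (n k : ℕ) : t (n + 1) (k + 1) + t n (k + 1) = t n k := by
  have h : g * f ^ (k + 1) * (1 + X) = g * f ^ k * X := by
    rw [pow_succ, ← mul_assoc]; rw [mul_assoc _ f (1+X), hf]
  have := congrArg (coeff (n + 1)) h
  rw [mul_add, mul_one, map_add, coeff_succ_mul_X, coeff_succ_mul_X] at this
  exact this

lemma t_g (n : ℕ) : t n 0 = coeff n g := by simp [t]

lemma R2 (n : ℕ) : t n 0 + t (n+1) 0 + t (n+2) 0 = 0 := by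
  have h : (1 + X + X ^ 2 : ℚ⟦X⟧) * g = 1 * g + X ^ 1 * g + X ^ 2 * g := by ring
  have := congrArg (coeff (n + 2)) (h ▸ hg)
  rw [map_add, map_add, one_mul, coeff_X_pow_mul', coeff_X_pow_mul',
    if_pos (by omega), if_pos (by omega)] at this
  simp only [Nat.add_sub_cancel, show n + 2 - 1 = n + 1 from by omega] at this
  rw [coeff_one, if_neg (by omega)] at this
  rw [t_g, t_g, t_g]
  linarith [this]

lemma R2a : t 0 0 = 1 := by
  have := congrArg (coeff 0) hg
  rw [coeff_zero_eq_constantCoeff, map_mul] at this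
  simp only [map_one] at this
  rw [t_g, coeff_zero_eq_constantCoeff]
  simpa using this

lemma R2b : t 0 0 + t 1 0 = 0 := by
  have h : (1 + X + X ^ 2 : ℚ⟦X⟧) * g = 1 * g + X ^ 1 * g + X ^ 2 * g := by ring
  have := congrArg (coeff 1) (h ▸ hg)
  rw [map_add, map_add, one_mul, coeff_X_pow_mul', coeff_X_pow_mul',
    if_pos (by omega), if_neg (by omega)] at this
  rw [coeff_one, if_neg (by omega)] at this
  simp only [show (1:ℕ)-1 = 0 from rfl] at this
  rw [t_g, t_g]
  linarith [this]

noncomputable def t' (n k : ℤ) : ℚ :=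
  if 0 ≤ n ∧ 0 ≤ k then t n.toNat k.toNat else 0

lemma t'_coe (a b : ℕ) : t' a b = t a b := by simp [t']

lemma t'_neg {n k : ℤ} (h : n < 0 ∨ k < 0) : t' n k = 0 := by
  rw [t', if_neg (by omega)]

lemma t'_big {n k : ℤ} (h : n < k) : t' n k = 0 := by
  rw [t']
  split_ifs with h'
  · exact t_zero (by omega)
  · rfl

lemma R1' (n j : ℤ) (hj : 1 ≤ j) : t' n j + t' (n - 1) j = t' (n - 1) (j - 1) := by
  lift j to ℕ using (by omega)
  rcases lt_or_ge n 1 with hn | hn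
  · rcases eq_or_lt_of_le (show n ≤ 0 by omega) with h0 | h0
    · rw [h0]
      rw [t'_big (by omega), t'_neg (by omega), t'_neg (by omega)]
      ring
    · rw [t'_neg (by omega), t'_neg (by omega), t'_neg (by omega)]
      ring
  · lift n to ℕ using (by omega)
    obtain ⟨m, rfl⟩ : ∃ m : ℕ, n = m + 1 := ⟨n - 1, by omega⟩
    obtain ⟨i, rfl⟩ : ∃ i : ℕ, j = i + 1 := ⟨j - 1, by omega⟩
    have e1 : ((m : ℤ) + 1 : ℤ) - 1 = (m : ℕ) := by push_cast; ring
    have e2 : ((i : ℤ) + 1 : ℤ) - 1 = (i : ℕ) := by push_cast; ring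
    push_cast
    rw [e1, e2]
    rw [show ((m:ℤ) + 1) = ((m + 1 : ℕ) : ℤ) from by norm_num,
        show ((i:ℤ) + 1) = ((i + 1 : ℕ) : ℤ) from by norm_num]
    rw [t'_coe, t'_coe, t'_coe]
    exact R1 m i

lemma t'_coe0 (a : ℕ) : t' (a : ℤ) 0 = t a 0 := by
  simpa using t'_coe a 0

lemma R2' (n : ℤ) : t' n 0 + t' (n - 1) 0 + t' (n - 2) 0 = if n = 0 then 1 else 0 := by
  rcases lt_or_ge n 0 with hn | hn
  · rw [t'_neg (by omega), t'_neg (by omega), t'_neg (by omega), if_neg (by omega)]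
    ring
  · lift n to ℕ using hn
    match n with
    | 0 =>
      norm_num
      have a1 : t' (-1) 0 = 0 := t'_neg (by omega)
      have a2 : t' (-2) 0 = 0 := t'_neg (by omega)
      have h0 : t' (0:ℤ) 0 = t 0 0 := by simpa using t'_coe 0 0
      rw [a1, a2, h0, R2a]; ring
    | 1 =>
      rw [if_neg (by omega)]
      push_cast
      have a1 : t' (-1) 0 = 0 := t'_neg (by omega)
      have h1 : t' (1:ℤ) 0 = t 1 0 := by simpa using t'_coe 1 0
      have h0 : t' (0:ℤ) 0 = t 0 0 := by simpa using t'_coe 0 0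
      rw [a1, h1, h0]
      have := R2b; linarith
    | (m+2) =>
      rw [if_neg (by omega)]
      rw [show ((m+2:ℕ):ℤ) - 1 = ((m+1:ℕ):ℤ) from by push_cast; ring,
        show ((m+2:ℕ):ℤ) - 2 = ((m:ℕ):ℤ) from by push_cast; ring,
        t'_coe0, t'_coe0, t'_coe0]
      have := R2 m; linarith

noncomputable def s' (n k : ℤ) : ℚ := if k ≤ n then t' n (n - k) else t' k (k - n)

lemma s'_symm (n k : ℤ) : s' n k = s' k n := by
  rw [s', s']
  rcases lt_trichotomy n k with h | h | h
  · rw [if_neg (by omega), if_pos (by omega)]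
  · subst h; simp
  · rw [if_pos (by omega), if_neg (by omega)]

lemma s'_neg {n k : ℤ} (h : n < 0 ∨ k < 0) : s' n k = 0 := by
  rw [s']
  split_ifs with h'
  · rcases lt_or_ge n 0 with h2 | h2
    · exact t'_neg (Or.inl h2)
    · exact t'_big (by omega)
  · rcases lt_or_ge k 0 with h2 | h2
    · exact t'_neg (Or.inl h2)
    · exact t'_big (by omega)
lemma SR_le (n k : ℤ) (hkn : k ≤ n) :
    s' n k - s' (n-1) k - s' n (k-1) + 3 * s' (n-1) (k-1) - s' (n-1) (k-2)
      - s' (n-2) (k-1) + s' (n-2) (k-2) = if n = 0 ∧ k = 0 then 1 else 0 := by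
  rcases eq_or_lt_of_le hkn with rfl | hlt
  · -- k = n
    have h1 : s' k k = t' k 0 := by rw [s', if_pos le_rfl, sub_self]
    have h2 : s' (k-1) k = t' k 1 := by
      rw [s', if_neg (by omega), show k - (k-1) = 1 from by ring]
    have h3 : s' k (k-1) = t' k 1 := by
      rw [s', if_pos (by omega), show k - (k-1) = 1 from by ring]
    have h4 : s' (k-1) (k-1) = t' (k-1) 0 := by rw [s', if_pos le_rfl, sub_self]
    have h5 : s' (k-1) (k-2) = t' (k-1) 1 := by
      rw [s', if_pos (by omega), show k - 1 - (k-2) = 1 from by ring]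
    have h6 : s' (k-2) (k-1) = t' (k-1) 1 := by
      rw [s', if_neg (by omega), show k - 1 - (k-2) = 1 from by ring]
    have h7 : s' (k-2) (k-2) = t' (k-2) 0 := by rw [s', if_pos le_rfl, sub_self]
    have e1 := R1' k 1 le_rfl
    rw [show (1:ℤ) - 1 = 0 from by ring] at e1
    have e2 := R2' k
    rw [h1, h2, h3, h4, h5, h6, h7]
    rcases eq_or_ne k 0 with rfl | hk
    · simp only [if_pos rfl, and_self] at *
      linarith
    · rw [if_neg hk] at e2
      rw [if_neg (by tauto)]
      linarith
  · -- k < n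
    have h1 : s' n k = t' n (n-k) := by rw [s', if_pos hkn]
    have h2 : s' (n-1) k = t' (n-1) (n-1-k) := by rw [s', if_pos (by omega)]
    have h3 : s' n (k-1) = t' n (n-(k-1)) := by rw [s', if_pos (by omega)]
    have h4 : s' (n-1) (k-1) = t' (n-1) (n-1-(k-1)) := by rw [s', if_pos (by omega)]
    have h5 : s' (n-1) (k-2) = t' (n-1) (n-1-(k-2)) := by rw [s', if_pos (by omega)]
    have h6 : s' (n-2) (k-1) = t' (n-2) (n-2-(k-1)) := by rw [s', if_pos (by omega)]
    have h7 : s' (n-2) (k-2) = t' (n-2) (n-2-(k-2)) := by rw [s', if_pos (by omega)]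
    have e1 := R1' n (n-k) (by omega)
    have e2 := R1' n (n-k+1) (by omega)
    have e3 := R1' (n-1) (n-k) (by omega)
    rw [h1, h2, h3, h4, h5, h6, h7, if_neg (by omega)]
    ring_nf at e1 e2 e3 ⊢
    linarith

lemma SR (n k : ℤ) :
    s' n k - s' (n-1) k - s' n (k-1) + 3 * s' (n-1) (k-1) - s' (n-1) (k-2)
      - s' (n-2) (k-1) + s' (n-2) (k-2) = if n = 0 ∧ k = 0 then 1 else 0 := by
  rcases le_total k n with h | h
  · exact SR_le n k h
  · have := SR_le k n h
    rw [s'_symm n k, s'_symm (n-1) k, s'_symm n (k-1), s'_symm (n-1) (k-1),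
      s'_symm (n-1) (k-2), s'_symm (n-2) (k-1), s'_symm (n-2) (k-2)]
    have hd : (if n = 0 ∧ k = 0 then (1:ℚ) else 0) = if k = 0 ∧ n = 0 then 1 else 0 := by
      by_cases hh : n = 0 <;> by_cases hk : k = 0 <;> simp [hh, hk]
    rw [hd]
    linarith
noncomputable def P : MvPowerSeries (Fin 2) ℚ :=
  (1 - MvPowerSeries.X 1 + MvPowerSeries.X 0 * MvPowerSeries.X 1) *
  (1 - MvPowerSeries.X 0 + MvPowerSeries.X 0 * MvPowerSeries.X 1)

lemma hPconst : MvPowerSeries.constantCoeff P ≠ 0 := by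
  simp [P]

noncomputable def Q : MvPowerSeries (Fin 2) ℚ := P⁻¹

lemma hPQ : P * Q = 1 := MvPowerSeries.mul_inv_cancel _ hPconst

noncomputable def c (n k : ℕ) : ℚ :=
  MvPowerSeries.coeff (Finsupp.single 0 n + Finsupp.single 1 k) Q

lemma coeff_shift (a b n k : ℕ) (φ : MvPowerSeries (Fin 2) ℚ) :
    MvPowerSeries.coeff (Finsupp.single 0 n + Finsupp.single 1 k)
      (MvPowerSeries.X 0 ^ a * MvPowerSeries.X 1 ^ b * φ) =
    if a ≤ n ∧ b ≤ k then
      MvPowerSeries.coeff (Finsupp.single 0 (n-a) + Finsupp.single 1 (k-b)) φ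
    else 0 := by
  rw [MvPowerSeries.X_pow_eq, MvPowerSeries.X_pow_eq, MvPowerSeries.monomial_mul_monomial,
    one_mul, MvPowerSeries.coeff_monomial_mul]
  have hle : (Finsupp.single (0 : Fin 2) a + Finsupp.single 1 b ≤
      Finsupp.single 0 n + Finsupp.single 1 k) ↔ (a ≤ n ∧ b ≤ k) := by
    rw [Finsupp.le_def]
    simp [Fin.forall_fin_two, Finsupp.single_apply]
  by_cases h : a ≤ n ∧ b ≤ k
  · have hsub : (Finsupp.single (0 : Fin 2) n + Finsupp.single 1 k) -
        (Finsupp.single 0 a + Finsupp.single 1 b) =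
        Finsupp.single 0 (n-a) + Finsupp.single 1 (k-b) := by
      ext i
      rw [Finsupp.tsub_apply]
      simp only [Finsupp.add_apply, Finsupp.single_apply]
      fin_cases i <;> simp
    rw [if_pos (hle.2 h), if_pos h, one_mul, hsub]
  · rw [if_neg (fun hc => h (hle.1 hc)), if_neg h]

lemma c_rec (n k : ℕ) :
    c n k - (if 1 ≤ n then c (n-1) k else 0) - (if 1 ≤ k then c n (k-1) else 0)
      + 3 * (if 1 ≤ n ∧ 1 ≤ k then c (n-1) (k-1) else 0)
      - (if 1 ≤ n ∧ 2 ≤ k then c (n-1) (k-2) else 0)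
      - (if 2 ≤ n ∧ 1 ≤ k then c (n-2) (k-1) else 0)
      + (if 2 ≤ n ∧ 2 ≤ k then c (n-2) (k-2) else 0)
      = if n = 0 ∧ k = 0 then 1 else 0 := by
  classical
  have expand : P * Q = Q - MvPowerSeries.X 0 ^ 1 * MvPowerSeries.X 1 ^ 0 * Q
      - MvPowerSeries.X 0 ^ 0 * MvPowerSeries.X 1 ^ 1 * Q
      + MvPowerSeries.X 0 ^ 1 * MvPowerSeries.X 1 ^ 1 * Q
      + MvPowerSeries.X 0 ^ 1 * MvPowerSeries.X 1 ^ 1 * Q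
      + MvPowerSeries.X 0 ^ 1 * MvPowerSeries.X 1 ^ 1 * Q
      - MvPowerSeries.X 0 ^ 1 * MvPowerSeries.X 1 ^ 2 * Q
      - MvPowerSeries.X 0 ^ 2 * MvPowerSeries.X 1 ^ 1 * Q
      + MvPowerSeries.X 0 ^ 2 * MvPowerSeries.X 1 ^ 2 * Q := by
    rw [P]; ring
  have key := congrArg (MvPowerSeries.coeff (Finsupp.single 0 n + Finsupp.single 1 k))
    (expand.symm.trans hPQ)
  simp only [map_add, map_sub, coeff_shift] at key
  have h1 : MvPowerSeries.coeff (Finsupp.single (0 : Fin 2) n + Finsupp.single 1 k)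
      (1 : MvPowerSeries (Fin 2) ℚ) = if n = 0 ∧ k = 0 then 1 else 0 := by
    rw [MvPowerSeries.coeff_one]
    congr 1
    simp [Finsupp.ext_iff, Fin.forall_fin_two, Finsupp.single_apply]
  rw [h1] at key
  simp only [Nat.zero_le, true_and, and_true, Nat.sub_zero, tsub_zero] at key
  simp only [c]
  linarith [key]
noncomputable def C' (n k : ℤ) : ℚ := if 0 ≤ n ∧ 0 ≤ k then c n.toNat k.toNat else 0

lemma C'_coe (a b : ℕ) : C' a b = c a b := by simp [C']

lemma C'_neg {n k : ℤ} (h : n < 0 ∨ k < 0) : C' n k = 0 := by rw [C', if_neg (by omega)]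

lemma C'_shift (n k a b : ℕ) :
    C' ((n:ℤ) - a) ((k:ℤ) - b) = if a ≤ n ∧ b ≤ k then c (n-a) (k-b) else 0 := by
  rw [C']
  split_ifs with h1 h2
  · congr 1 <;> omega
  · exfalso; omega
  · exfalso; omega
  · rfl

lemma CR (n k : ℤ) :
    C' n k - C' (n-1) k - C' n (k-1) + 3 * C' (n-1) (k-1) - C' (n-1) (k-2)
      - C' (n-2) (k-1) + C' (n-2) (k-2) = if n = 0 ∧ k = 0 then 1 else 0 := by
  by_cases h0 : n < 0 ∨ k < 0
  · have a1 : C' n k = 0 := by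
      rcases h0 with h | h
      · exact C'_neg (Or.inl h)
      · exact C'_neg (Or.inr h)
    have a2 : C' (n-1) k = 0 := C'_neg (by omega)
    have a3 : C' n (k-1) = 0 := C'_neg (by omega)
    have a4 : C' (n-1) (k-1) = 0 := C'_neg (by omega)
    have a5 : C' (n-1) (k-2) = 0 := C'_neg (by omega)
    have a6 : C' (n-2) (k-1) = 0 := C'_neg (by omega)
    have a7 : C' (n-2) (k-2) = 0 := C'_neg (by omega)
    rw [a1, a2, a3, a4, a5, a6, a7, if_neg (by omega)]
    ring
  · push_neg at h0
    obtain ⟨hn, hk⟩ := h0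
    lift n to ℕ using hn
    lift k to ℕ using hk
    have g0 : C' (n:ℤ) (k:ℤ) = c n k := C'_coe n k
    have g1 : C' ((n:ℤ) - 1) (k:ℤ) = if 1 ≤ n then c (n-1) k else 0 := by
      have := C'_shift n k 1 0; simpa using this
    have g2 : C' (n:ℤ) ((k:ℤ) - 1) = if 1 ≤ k then c n (k-1) else 0 := by
      have := C'_shift n k 0 1; simpa using this
    have g3 : C' ((n:ℤ) - 1) ((k:ℤ) - 1) = if 1 ≤ n ∧ 1 ≤ k then c (n-1) (k-1) else 0 := by
      have := C'_shift n k 1 1; simpa using this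
    have g4 : C' ((n:ℤ) - 1) ((k:ℤ) - 2) = if 1 ≤ n ∧ 2 ≤ k then c (n-1) (k-2) else 0 := by
      have := C'_shift n k 1 2; simpa using this
    have g5 : C' ((n:ℤ) - 2) ((k:ℤ) - 1) = if 2 ≤ n ∧ 1 ≤ k then c (n-2) (k-1) else 0 := by
      have := C'_shift n k 2 1; simpa using this
    have g6 : C' ((n:ℤ) - 2) ((k:ℤ) - 2) = if 2 ≤ n ∧ 2 ≤ k then c (n-2) (k-2) else 0 := by
      have := C'_shift n k 2 2; simpa using this
    rw [g0, g1, g2, g3, g4, g5, g6]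
    simp only [Nat.cast_eq_zero]
    exact c_rec n k

lemma unique (A B : ℤ → ℤ → ℚ)
    (hA0 : ∀ n k : ℤ, n < 0 ∨ k < 0 → A n k = 0)
    (hB0 : ∀ n k : ℤ, n < 0 ∨ k < 0 → B n k = 0)
    (hA : ∀ n k : ℤ, A n k - A (n-1) k - A n (k-1) + 3 * A (n-1) (k-1) - A (n-1) (k-2)
      - A (n-2) (k-1) + A (n-2) (k-2) = if n = 0 ∧ k = 0 then 1 else 0)
    (hB : ∀ n k : ℤ, B n k - B (n-1) k - B n (k-1) + 3 * B (n-1) (k-1) - B (n-1) (k-2)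
      - B (n-2) (k-1) + B (n-2) (k-2) = if n = 0 ∧ k = 0 then 1 else 0) :
    ∀ n k : ℤ, A n k = B n k := by
  have main : ∀ m : ℕ, ∀ n k : ℤ, n + k < m → A n k = B n k := by
    intro m
    induction m with
    | zero =>
      intro n k h
      rw [hA0 n k (by omega), hB0 n k (by omega)]
    | succ m ih =>
      intro n k h
      by_cases h0 : n < 0 ∨ k < 0
      · rw [hA0 n k h0, hB0 n k h0]
      · have eA := hA n k
        have eB := hB n k
        have i1 := ih (n-1) k (by omega)
        have i2 := ih n (k-1) (by omega)
        have i3 := ih (n-1) (k-1) (by omega)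
        have i4 := ih (n-1) (k-2) (by omega)
        have i5 := ih (n-2) (k-1) (by omega)
        have i6 := ih (n-2) (k-2) (by omega)
        linarith
  intro n k
  by_cases h0 : n < 0 ∨ k < 0
  · rw [hA0 n k h0, hB0 n k h0]
  · exact main (n + k + 1).toNat n k (by omega)

lemma s'_eq_C' (n k : ℤ) : s' n k = C' n k :=
  unique s' C' (fun _ _ h => s'_neg h) (fun _ _ h => C'_neg h) SR CR n k

end SqSym

/-- The square symmetrization of the Riordan array `(1/(1+x+x²), x/(1+x))` has bivariate
generating function `1/((1-y+xy)(1-x+xy))`: with `t(n,k) = [xⁿ] g·fᵏ`,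
`s(n,k) = t(n, n-k)` for `k ≤ n` and `t(k, k-n)` otherwise, the entries `s(n,k)` are
the coefficients of `((1-y+xy)(1-x+xy))⁻¹`. -/
theorem square_symmetrization_example1 :
    ∀ n k : ℕ,
      (let g : ℚ⟦X⟧ := (1 + X + X ^ 2)⁻¹
       let f : ℚ⟦X⟧ := X * (1 + X)⁻¹
       let t : ℕ → ℕ → ℚ := fun n k => (coeff n) (g * f ^ k)
       if k ≤ n then t n (n - k) else t k (k - n)) =
      MvPowerSeries.coeff (Finsupp.single 0 n + Finsupp.single 1 k)
        (((1 - MvPowerSeries.X 1 + MvPowerSeries.X 0 * MvPowerSeries.X 1) *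
          (1 - MvPowerSeries.X 0 + MvPowerSeries.X 0 * MvPowerSeries.X 1) :
            MvPowerSeries (Fin 2) ℚ))⁻¹ := by
  intro n k
  show (if k ≤ n then SqSym.t n (n - k) else SqSym.t k (k - n)) = SqSym.c n k
  have hL : (if k ≤ n then SqSym.t n (n - k) else SqSym.t k (k - n)) = SqSym.s' n k := by
    rw [SqSym.s']
    by_cases h : k ≤ n
    · rw [if_pos h, if_pos (by exact_mod_cast h),
        show (n:ℤ) - k = ((n - k : ℕ) : ℤ) from by omega, SqSym.t'_coe]
    · rw [if_neg h, if_neg (by exact_mod_cast h),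
        show (k:ℤ) - n = ((k - n : ℕ) : ℤ) from by omega, SqSym.t'_coe]
  rw [hL, SqSym.s'_eq_C', SqSym.C'_coe]
end

section
/- The square symmetrization of the Riordan array (1/((1-x)·sqrt(1-4x)), x·c(x)) has bivariate generating function 1/((1-xy)(1-x-y)); that is, with t(n,k) = ∑_{j=0}^{n-k} binomial(k+2j,j), the symmetric matrix s(n,k) = t(max(n,k), |n-k|) satisfies ∑_{n,k≥0} s(n,k) x^n y^k = 1/((1-xy)(1-x-y)). -/
open PowerSeries

noncomputable section AuxSSR1

def ssr1 (n k : ℕ) : ℚ :=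
  ∑ m ∈ Finset.range (min n k + 1), (Nat.choose (n + k - 2 * m) (n - m) : ℚ)

def SSR1 : MvPowerSeries (Fin 2) ℚ := fun d => ssr1 (d 0) (d 1)

def BSR1 : MvPowerSeries (Fin 2) ℚ := fun d => (Nat.choose (d 0 + d 1) (d 0) : ℚ)

lemma fin2_finsupp_le (e d : Fin 2 →₀ ℕ) : e ≤ d ↔ e 0 ≤ d 0 ∧ e 1 ≤ d 1 := by
  rw [Finsupp.le_def, Fin.forall_fin_two]

lemma ssr1_shift (n k : ℕ) :
    ssr1 (n + 1) (k + 1) = (Nat.choose (n + 1 + (k + 1)) (n + 1) : ℚ) + ssr1 n k := by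
  unfold ssr1
  rw [show min (n+1) (k+1) + 1 = (min n k + 1) + 1 by omega, Finset.sum_range_succ']
  rw [add_comm]
  congr 1
  refine Finset.sum_congr rfl fun m hm => ?_
  simp only [Finset.mem_range] at hm
  congr 2 <;> omega

lemma ssr1_base {n k : ℕ} (h : min n k = 0) :
    ssr1 n k = (Nat.choose (n + k) n : ℚ) := by
  unfold ssr1
  rw [h]
  norm_num

lemma ssr1_sub (n k : ℕ) (hn : 1 ≤ n) (hk : 1 ≤ k) :
    ssr1 n k - ssr1 (n - 1) (k - 1) = (Nat.choose (n + k) n : ℚ) := by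
  obtain ⟨n, rfl⟩ : ∃ m, n = m + 1 := ⟨n - 1, by omega⟩
  obtain ⟨k, rfl⟩ : ∃ m, k = m + 1 := ⟨k - 1, by omega⟩
  rw [ssr1_shift]
  simp

lemma pascal_q (n k : ℕ) (hn : 1 ≤ n) (hk : 1 ≤ k) :
    (Nat.choose (n + k) n : ℚ) - (Nat.choose (n - 1 + k) (n - 1) : ℚ)
      - (Nat.choose (n + (k - 1)) n : ℚ) = 0 := by
  obtain ⟨n, rfl⟩ : ∃ m, n = m + 1 := ⟨n - 1, by omega⟩
  obtain ⟨k, rfl⟩ : ∃ m, k = m + 1 := ⟨k - 1, by omega⟩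
  simp only [Nat.add_sub_cancel]
  rw [show n + 1 + (k + 1) = (n + (k + 1)) + 1 by ring,
    Nat.choose_succ_succ' (n + (k + 1)) n, show n + (k + 1) = n + 1 + k by ring]
  push_cast
  ring

lemma SSR1_mul : SSR1 * (1 - MvPowerSeries.X 0 * MvPowerSeries.X 1) = BSR1 := by
  ext d
  rw [mul_one_sub, map_sub, MvPowerSeries.X_def, MvPowerSeries.X_def,
    MvPowerSeries.monomial_mul_monomial, MvPowerSeries.coeff_mul_monomial]
  have happ0 : ((Finsupp.single (0:Fin 2) 1 + Finsupp.single 1 1 : Fin 2 →₀ ℕ)) 0 = 1 := by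
    simp [Finsupp.single_eq_of_ne (by decide : (1:Fin 2) ≠ 0)]
  have happ1 : ((Finsupp.single (0:Fin 2) 1 + Finsupp.single 1 1 : Fin 2 →₀ ℕ)) 1 = 1 := by
    simp [Finsupp.single_eq_of_ne (by decide : (0:Fin 2) ≠ 1)]
  by_cases h : (Finsupp.single (0:Fin 2) 1 + Finsupp.single 1 1) ≤ d
  · rw [if_pos h]
    rw [fin2_finsupp_le, happ0, happ1] at h
    have hc0 : ((d - (Finsupp.single (0:Fin 2) 1 + Finsupp.single 1 1) : Fin 2 →₀ ℕ)) 0 = d 0 - 1 := by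
      rw [Finsupp.tsub_apply, happ0]
    have hc1 : ((d - (Finsupp.single (0:Fin 2) 1 + Finsupp.single 1 1) : Fin 2 →₀ ℕ)) 1 = d 1 - 1 := by
      rw [Finsupp.tsub_apply, happ1]
    show ssr1 (d 0) (d 1) - ssr1 _ _ * (1 * 1) = (Nat.choose (d 0 + d 1) (d 0) : ℚ)
    rw [hc0, hc1, mul_one, mul_one]
    exact ssr1_sub _ _ h.1 h.2
  · rw [if_neg h]
    rw [fin2_finsupp_le, happ0, happ1] at h
    show ssr1 (d 0) (d 1) - 0 = (Nat.choose (d 0 + d 1) (d 0) : ℚ)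
    rw [sub_zero, ssr1_base (by omega)]

lemma BSR1_mul : BSR1 * (1 - MvPowerSeries.X 0 - MvPowerSeries.X 1) = 1 := by
  ext d
  rw [mul_sub, mul_sub, mul_one, map_sub, map_sub, MvPowerSeries.X_def,
    MvPowerSeries.X_def, MvPowerSeries.coeff_mul_monomial, MvPowerSeries.coeff_mul_monomial,
    MvPowerSeries.coeff_one]
  have h0 : Finsupp.single (0:Fin 2) 1 ≤ d ↔ 1 ≤ d 0 := Finsupp.single_le_iff
  have h1 : Finsupp.single (1:Fin 2) 1 ≤ d ↔ 1 ≤ d 1 := Finsupp.single_le_iff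
  have hc00 : ((d - Finsupp.single (0:Fin 2) 1 : Fin 2 →₀ ℕ)) 0 = d 0 - 1 := by
    rw [Finsupp.tsub_apply, Finsupp.single_eq_same]
  have hc01 : ((d - Finsupp.single (0:Fin 2) 1 : Fin 2 →₀ ℕ)) 1 = d 1 := by
    rw [Finsupp.tsub_apply, Finsupp.single_eq_of_ne' (by decide : (0:Fin 2) ≠ 1)]; omega
  have hc10 : ((d - Finsupp.single (1:Fin 2) 1 : Fin 2 →₀ ℕ)) 0 = d 0 := by
    rw [Finsupp.tsub_apply, Finsupp.single_eq_of_ne' (by decide : (1:Fin 2) ≠ 0)]; omega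
  have hc11 : ((d - Finsupp.single (1:Fin 2) 1 : Fin 2 →₀ ℕ)) 1 = d 1 - 1 := by
    rw [Finsupp.tsub_apply, Finsupp.single_eq_same]
  have hd0 : d = 0 ↔ d 0 = 0 ∧ d 1 = 0 := by
    constructor
    · rintro rfl; simp
    · rintro ⟨ha, hb⟩
      ext i; revert i; rw [Fin.forall_fin_two]; simp [ha, hb]
  by_cases e0 : 1 ≤ d 0 <;> by_cases e1 : 1 ≤ d 1
  · rw [if_pos (h0.2 e0), if_pos (h1.2 e1), if_neg (by rw [hd0]; omega)]
    show (Nat.choose (d 0 + d 1) (d 0) : ℚ) - (Nat.choose (_ + _) _ : ℚ) * 1 -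
      (Nat.choose (_ + _) _ : ℚ) * 1 = 0
    rw [hc00, hc01, hc10, hc11, mul_one, mul_one]
    exact pascal_q _ _ e0 e1
  · rw [if_pos (h0.2 e0), if_neg (fun hh => e1 (h1.1 hh)), if_neg (by rw [hd0]; omega)]
    show (Nat.choose (d 0 + d 1) (d 0) : ℚ) - (Nat.choose (_ + _) _ : ℚ) * 1 - 0 = 0
    rw [hc00, hc01, show d 1 = 0 by omega]
    simp [Nat.choose_self]
  · rw [if_neg (fun hh => e0 (h0.1 hh)), if_pos (h1.2 e1), if_neg (by rw [hd0]; omega)]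
    show (Nat.choose (d 0 + d 1) (d 0) : ℚ) - 0 - (Nat.choose (_ + _) _ : ℚ) * 1 = 0
    rw [hc10, hc11, show d 0 = 0 by omega]
    simp
  · rw [if_neg (fun hh => e0 (h0.1 hh)), if_neg (fun hh => e1 (h1.1 hh)),
      if_pos (hd0.2 ⟨by omega, by omega⟩)]
    show (Nat.choose (d 0 + d 1) (d 0) : ℚ) - 0 - 0 = 1
    rw [show d 0 = 0 by omega, show d 1 = 0 by omega]
    simp

lemma SSR1_inv :
    (((1 - MvPowerSeries.X 0 * MvPowerSeries.X 1) *
      (1 - MvPowerSeries.X 0 - MvPowerSeries.X 1) : MvPowerSeries (Fin 2) ℚ))⁻¹ = SSR1 := by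
  rw [MvPowerSeries.inv_eq_iff_mul_eq_one]
  · rw [← mul_assoc, SSR1_mul, BSR1_mul]
  · simp [MvPowerSeries.constantCoeff_X]

end AuxSSR1

/-- The square symmetrization of `(1/((1-x)√(1-4x)), x·c(x))`, whose entries are
`t(n,k) = ∑_{j=0}^{n-k} C(k+2j, j)`, has bivariate generating function
`1/((1-xy)(1-x-y))`. -/
theorem square_symmetrization_R1 :
    ∀ n k : ℕ,
      (let t : ℕ → ℕ → ℚ := fun n k => ∑ j ∈ Finset.range (n - k + 1),
        (Nat.choose (k + 2 * j) j : ℚ)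
       if k ≤ n then t n (n - k) else t k (k - n)) =
      MvPowerSeries.coeff (Finsupp.single 0 n + Finsupp.single 1 k)
        (((1 - MvPowerSeries.X 0 * MvPowerSeries.X 1) *
          (1 - MvPowerSeries.X 0 - MvPowerSeries.X 1) : MvPowerSeries (Fin 2) ℚ))⁻¹ := by
  intro n k
  rw [SSR1_inv]
  have hd0 : ((Finsupp.single (0:Fin 2) n + Finsupp.single 1 k : Fin 2 →₀ ℕ)) 0 = n := by
    simp [Finsupp.single_eq_of_ne' (by decide : (1:Fin 2) ≠ 0)]
  have hd1 : ((Finsupp.single (0:Fin 2) n + Finsupp.single 1 k : Fin 2 →₀ ℕ)) 1 = k := by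
    simp [Finsupp.single_eq_of_ne' (by decide : (0:Fin 2) ≠ 1)]
  have hS : MvPowerSeries.coeff (Finsupp.single 0 n + Finsupp.single 1 k) SSR1
      = ssr1 n k := by
    rw [MvPowerSeries.coeff_apply]
    show ssr1 _ _ = _
    rw [hd0, hd1]
  rw [hS]
  show (if k ≤ n then ∑ j ∈ Finset.range (n - (n - k) + 1), (Nat.choose ((n-k) + 2 * j) j : ℚ)
    else ∑ j ∈ Finset.range (k - (k - n) + 1), (Nat.choose ((k-n) + 2 * j) j : ℚ)) = ssr1 n k
  unfold ssr1
  split_ifs with h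
  · rw [show n - (n - k) = k by omega, show min n k = k by omega, ← Finset.sum_range_reflect]
    refine Finset.sum_congr rfl fun j hj => ?_
    simp only [Finset.mem_range] at hj
    rw [show k + 1 - 1 - j = k - j by omega,
      show n - k + 2 * (k - j) = n + k - 2 * j by omega,
      show k - j = (n + k - 2 * j) - (n - j) by omega,
      Nat.choose_symm (by omega)]
  · rw [show k - (k - n) = n by omega, show min n k = n by omega, ← Finset.sum_range_reflect]
    refine Finset.sum_congr rfl fun j hj => ?_
    simp only [Finset.mem_range] at hj
    rw [show n + 1 - 1 - j = n - j by omega,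
      show k - n + 2 * (n - j) = n + k - 2 * j by omega]
end

section
/- The square symmetrization of the Riordan array (1/((1-2x)·sqrt(1-4x)), x·c(x)) has bivariate generating function 1/((1-2xy)(1-x-y)); that is, with t(n,k) = ∑_{j=0}^{n-k} 2^{n-j-k}·binomial(k+2j,j), the symmetric matrix s(n,k) = t(max(n,k), |n-k|) satisfies ∑_{n,k} s(n,k) x^n y^k = 1/((1-2xy)(1-x-y)). -/
open PowerSeries

private def ff (d m : ℕ) : ℚ :=
  ∑ j ∈ Finset.range (m + 1), (2 : ℚ) ^ (m - j) * ((d + 2 * j).choose j : ℚ)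

private lemma ff_zero (d : ℕ) : ff d 0 = 1 := by simp [ff]

private lemma ffR1 (d m : ℕ) :
    ff d (m + 1) = 2 * ff d m + ((d + 2 * (m + 1)).choose (m + 1) : ℚ) := by
  rw [ff, Finset.sum_range_succ, ff, Finset.mul_sum]
  congr 1
  · apply Finset.sum_congr rfl
    intro j hj
    rw [Finset.mem_range] at hj
    have h : m + 1 - j = (m - j) + 1 := by omega
    rw [h, pow_succ]
    ring
  · simp

private lemma ffR2 (d m : ℕ) : ff (d + 1) (m + 1) = ff d (m + 1) + ff (d + 2) m := by
  have h1 : ∀ e : ℕ, ff e (m + 1) =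
      (∑ i ∈ Finset.range (m + 1), (2:ℚ) ^ (m - i) * ((e + 2 * (i+1)).choose (i+1) : ℚ))
        + 2 ^ (m + 1) := by
    intro e
    rw [ff, Finset.sum_range_succ']
    congr 1
    · apply Finset.sum_congr rfl
      intro i hi
      rw [Finset.mem_range] at hi
      have h : m + 1 - (i + 1) = m - i := by omega
      rw [h]
    · simp
  rw [h1, h1, ff]
  have h2 : ∀ i : ℕ, ((d + 1 + 2 * (i+1)).choose (i+1) : ℚ)
      = ((d + 2 * (i+1)).choose (i+1) : ℚ) + ((d + 2 + 2 * i).choose i : ℚ) := by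
    intro i
    have h3 : d + 1 + 2 * (i + 1) = (d + 2 + 2 * i) + 1 := by omega
    have h4 : d + 2 * (i + 1) = d + 2 + 2 * i := by omega
    rw [h3, h4, Nat.choose_succ_succ]
    push_cast; ring
  have h5 : (∑ i ∈ Finset.range (m + 1), (2:ℚ) ^ (m - i) * ((d+1 + 2 * (i+1)).choose (i+1) : ℚ))
      = (∑ i ∈ Finset.range (m + 1), (2:ℚ) ^ (m - i) * ((d + 2 * (i+1)).choose (i+1) : ℚ))
        + ∑ i ∈ Finset.range (m + 1), (2:ℚ) ^ (m - i) * ((d + 2 + 2 * i).choose i : ℚ) := by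
    rw [← Finset.sum_add_distrib]
    apply Finset.sum_congr rfl
    intro i _
    rw [h2]; ring
  rw [h5]; ring

private def gg (n k : ℕ) : ℚ := if k ≤ n then ff (n - k) k else ff (k - n) n

private lemma gg_comm (n k : ℕ) : gg n k = gg k n := by
  unfold gg
  rcases lt_trichotomy n k with h | h | h
  · rw [if_neg (by omega), if_pos (by omega)]
  · subst h; simp
  · rw [if_pos (by omega), if_neg (by omega)]

private lemma gg_eq_le {n k a : ℕ} (h : k ≤ n) (h2 : n - k = a) : gg n k = ff a k := by
  unfold gg; rw [if_pos h, h2]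

private lemma gg_eq_gt {n k a : ℕ} (h : ¬ k ≤ n) (h2 : k - n = a) : gg n k = ff a n := by
  unfold gg; rw [if_neg h, h2]

private lemma key (n k : ℕ) :
    gg n k - (if 1 ≤ n then gg (n-1) k else 0) - (if 1 ≤ k then gg n (k-1) else 0)
      - 2 * (if 1 ≤ n ∧ 1 ≤ k then gg (n-1) (k-1) else 0)
      + 2 * (if 2 ≤ n ∧ 1 ≤ k then gg (n-2) (k-1) else 0)
      + 2 * (if 1 ≤ n ∧ 2 ≤ k then gg (n-1) (k-2) else 0)
      = if n = 0 ∧ k = 0 then 1 else 0 := by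
  rcases Nat.eq_zero_or_pos k with hk | hk
  · subst hk
    rcases Nat.eq_zero_or_pos n with hn | hn
    · subst hn; simp [gg, ff_zero]
    · obtain ⟨a, rfl⟩ : ∃ a, n = a + 1 := ⟨n - 1, by omega⟩
      simp [gg, ff_zero]
  rcases Nat.eq_zero_or_pos n with hn | hn
  · subst hn
    obtain ⟨a, rfl⟩ : ∃ a, k = a + 1 := ⟨k - 1, by omega⟩
    have e1 : gg 0 (a+1) = ff (a+1) 0 := gg_eq_gt (by omega) (by omega)
    have e2 : gg 0 a = ff a 0 := by
      rcases Nat.eq_zero_or_pos a with ha | ha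
      · subst ha; exact gg_eq_le (by omega) (by omega)
      · exact gg_eq_gt (by omega) (by omega)
    rw [if_neg (by omega), if_pos (by omega), if_neg (by omega), if_neg (by omega),
      if_neg (by omega), if_neg (by omega)]
    simp only [Nat.add_sub_cancel, e1, e2, ff_zero]
    ring
  -- now 1 ≤ n, 1 ≤ k
  rw [if_pos (by omega : 1 ≤ n), if_pos (by omega : 1 ≤ k), if_pos (by exact ⟨by omega, by omega⟩ : 1 ≤ n ∧ 1 ≤ k), if_neg (by omega : ¬(n = 0 ∧ k = 0))]
  rcases lt_trichotomy n k with hlt | heq | hgt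
  · -- 1 ≤ n < k
    obtain ⟨m, rfl⟩ : ∃ m, n = m + 1 := ⟨n - 1, by omega⟩
    obtain ⟨e, rfl⟩ : ∃ e, k = m + 1 + e + 1 := ⟨k - m - 2, by omega⟩
    have e1 : gg (m+1) (m+1+e+1) = ff (e+1) (m+1) := gg_eq_gt (by omega) (by omega)
    have e2 : gg (m+1-1) (m+1+e+1) = ff (e+2) m := gg_eq_gt (by omega) (by omega)
    have e3 : gg (m+1) (m+1+e+1-1) = ff e (m+1) := by
      rcases Nat.eq_zero_or_pos e with he | he
      · subst he; exact gg_eq_le (by omega) (by omega)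
      · exact gg_eq_gt (by omega) (by omega)
    have e4 : gg (m+1-1) (m+1+e+1-1) = ff (e+1) m := gg_eq_gt (by omega) (by omega)
    rw [e1, e2, e3, e4]
    rcases Nat.eq_zero_or_pos m with hm | hm
    · subst hm
      rw [if_neg (by omega), if_pos (by omega)]
      have e5 : gg (0+1-1) (0+1+e+1-2) = ff e 0 := by
        rcases Nat.eq_zero_or_pos e with he | he
        · subst he; exact gg_eq_le (by omega) (by omega)
        · exact gg_eq_gt (by omega) (by omega)
      rw [e5]
      have h1 := ffR2 e 0
      simp only [ff_zero] at *
      linarith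
    · obtain ⟨p, rfl⟩ : ∃ p, m = p + 1 := ⟨m - 1, by omega⟩
      rw [if_pos (by omega), if_pos (by omega)]
      have e5 : gg (p+1+1-2) (p+1+1+e+1-1) = ff (e+2) p := gg_eq_gt (by omega) (by omega)
      have e6 : gg (p+1+1-1) (p+1+1+e+1-2) = ff e (p+1) := by
        rcases Nat.eq_zero_or_pos e with he | he
        · subst he; exact gg_eq_le (by omega) (by omega)
        · exact gg_eq_gt (by omega) (by omega)
      rw [e5, e6]
      have h1 := ffR2 e (p+1)
      have h2 := ffR2 e p
      linarith
  · -- diagonal n = k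
    subst heq
    obtain ⟨m, rfl⟩ : ∃ m, n = m + 1 := ⟨n - 1, by omega⟩
    have e1 : gg (m+1) (m+1) = ff 0 (m+1) := gg_eq_le (by omega) (by omega)
    have e2 : gg (m+1-1) (m+1) = ff 1 m := gg_eq_gt (by omega) (by omega)
    have e3 : gg (m+1) (m+1-1) = ff 1 m := gg_eq_le (by omega) (by omega)
    have e4 : gg (m+1-1) (m+1-1) = ff 0 m := gg_eq_le (by omega) (by omega)
    rw [e1, e2, e3, e4]
    rcases Nat.eq_zero_or_pos m with hm | hm
    · subst hm
      rw [if_neg (by omega), if_neg (by omega)]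
      have h1 := ffR1 0 0
      norm_num [ff_zero] at *
      norm_num [ff, Finset.sum_range_succ]
    · obtain ⟨p, rfl⟩ : ∃ p, m = p + 1 := ⟨m - 1, by omega⟩
      rw [if_pos (by omega), if_pos (by omega)]
      have e5 : gg (p+1+1-2) (p+1+1-1) = ff 1 p := gg_eq_gt (by omega) (by omega)
      have e6 : gg (p+1+1-1) (p+1+1-2) = ff 1 p := gg_eq_le (by omega) (by omega)
      rw [e5, e6]
      have h1 := ffR1 0 (p+1)
      have h2 := ffR1 1 p
      have h3 : ((0 + 2 * (p+1+1)).choose (p+1+1) : ℚ)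
          = 2 * ((1 + 2 * (p+1)).choose (p+1) : ℚ) := by
        have ha : 0 + 2 * (p+1+1) = (2*p+3) + 1 := by omega
        have hb : 1 + 2 * (p+1) = 2*p+3 := by omega
        rw [ha, hb]
        have hc : (2*p+3+1).choose (p+1+1) = (2*p+3).choose (p+1) + (2*p+3).choose (p+2) := by
          exact_mod_cast Nat.choose_succ_succ (2*p+3) (p+1)
        have hd : (2*p+3).choose (p+2) = (2*p+3).choose (p+1) := by
          rw [← Nat.choose_symm (by omega : p+2 ≤ 2*p+3)]
          congr 1; omega
        rw [hc, hd]; push_cast; ring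
      linarith
  · -- 1 ≤ k < n : mirror
    obtain ⟨m, rfl⟩ : ∃ m, k = m + 1 := ⟨k - 1, by omega⟩
    obtain ⟨e, rfl⟩ : ∃ e, n = m + 1 + e + 1 := ⟨n - m - 2, by omega⟩
    have e1 : gg (m+1+e+1) (m+1) = ff (e+1) (m+1) := gg_eq_le (by omega) (by omega)
    have e2 : gg (m+1+e+1-1) (m+1) = ff e (m+1) := gg_eq_le (by omega) (by omega)
    have e3 : gg (m+1+e+1) (m+1-1) = ff (e+2) m := gg_eq_le (by omega) (by omega)
    have e4 : gg (m+1+e+1-1) (m+1-1) = ff (e+1) m := gg_eq_le (by omega) (by omega)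
    rw [e1, e2, e3, e4]
    rw [if_pos (by omega)]
    have e5 : gg (m+1+e+1-2) (m+1-1) = ff e m := gg_eq_le (by omega) (by omega)
    rw [e5]
    rcases Nat.eq_zero_or_pos m with hm | hm
    · subst hm
      rw [if_neg (by omega)]
      have h1 := ffR2 e 0
      simp only [ff_zero] at *
      linarith
    · obtain ⟨p, rfl⟩ : ∃ p, m = p + 1 := ⟨m - 1, by omega⟩
      rw [if_pos (by omega)]
      have e6 : gg (p+1+1+e+1-1) (p+1+1-2) = ff (e+2) p := gg_eq_le (by omega) (by omega)
      rw [e6]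
      have h1 := ffR2 e (p+1)
      have h2 := ffR2 e p
      linarith

private noncomputable def M (a b : ℕ) (c : ℚ) : MvPowerSeries (Fin 2) ℚ :=
  MvPowerSeries.monomial (Finsupp.single 0 a + Finsupp.single 1 b) c

private lemma M_mul (a b a' b' : ℕ) (c c' : ℚ) :
    M a b c * M a' b' c' = M (a + a') (b + b') (c * c') := by
  unfold M
  rw [MvPowerSeries.monomial_mul_monomial]
  congr 1
  rw [Finsupp.single_add, Finsupp.single_add]
  abel_nf

private lemma X0_eq : (MvPowerSeries.X 0 : MvPowerSeries (Fin 2) ℚ) = M 1 0 1 := by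
  unfold M; rw [Finsupp.single_zero, add_zero]; rfl

private lemma X1_eq : (MvPowerSeries.X 1 : MvPowerSeries (Fin 2) ℚ) = M 0 1 1 := by
  unfold M; rw [Finsupp.single_zero, zero_add]; rfl

private lemma one_eq : (1 : MvPowerSeries (Fin 2) ℚ) = M 0 0 1 := by
  unfold M
  rw [Finsupp.single_zero, Finsupp.single_zero, add_zero,
    MvPowerSeries.monomial_zero_eq_C_apply, map_one]

private lemma two_eq : (2 : MvPowerSeries (Fin 2) ℚ) = M 0 0 2 := by
  unfold M
  rw [Finsupp.single_zero, Finsupp.single_zero, add_zero,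
    MvPowerSeries.monomial_zero_eq_C_apply]
  exact (map_ofNat (MvPowerSeries.C (σ := Fin 2) (R := ℚ)) 2).symm

private lemma hA :
    ((1 - 2 * (MvPowerSeries.X 0 * MvPowerSeries.X 1)) *
      (1 - MvPowerSeries.X 0 - MvPowerSeries.X 1) : MvPowerSeries (Fin 2) ℚ)
    = M 0 0 1 - M 1 0 1 - M 0 1 1 - M 1 1 2 + M 2 1 2 + M 1 2 2 := by
  rw [X0_eq, X1_eq, one_eq, two_eq]
  have expand : ∀ a b c d : MvPowerSeries (Fin 2) ℚ,
      (a - b * (c * d)) * (a - c - d)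
        = a*a - a*c - a*d - b*(c*d)*a + b*(c*d)*c + b*(c*d)*d := by
    intros; ring
  rw [expand]
  simp only [M_mul]
  norm_num

private noncomputable def S : MvPowerSeries (Fin 2) ℚ := fun d => gg (d 0) (d 1)

private lemma coeff_S (e : Fin 2 →₀ ℕ) : MvPowerSeries.coeff e S = gg (e 0) (e 1) := rfl

private lemma pair_le (a b : ℕ) (d : Fin 2 →₀ ℕ) :
    (Finsupp.single 0 a + Finsupp.single 1 b : Fin 2 →₀ ℕ) ≤ d ↔ a ≤ d 0 ∧ b ≤ d 1 := by
  simp [Finsupp.le_def, Fin.forall_fin_two, Finsupp.single_apply]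

private lemma pair_sub0 (a b : ℕ) (d : Fin 2 →₀ ℕ) :
    ((d - (Finsupp.single 0 a + Finsupp.single 1 b) : Fin 2 →₀ ℕ)) 0 = d 0 - a := by
  simp [Finsupp.tsub_apply, Finsupp.single_apply]

private lemma pair_sub1 (a b : ℕ) (d : Fin 2 →₀ ℕ) :
    ((d - (Finsupp.single 0 a + Finsupp.single 1 b) : Fin 2 →₀ ℕ)) 1 = d 1 - b := by
  simp [Finsupp.tsub_apply, Finsupp.single_apply]

private lemma coeff_S_mul_M (d : Fin 2 →₀ ℕ) (a b : ℕ) (c : ℚ) :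
    MvPowerSeries.coeff d (S * M a b c) =
      if a ≤ d 0 ∧ b ≤ d 1 then gg (d 0 - a) (d 1 - b) * c else 0 := by
  unfold M
  rw [MvPowerSeries.coeff_mul_monomial]
  by_cases h : a ≤ d 0 ∧ b ≤ d 1
  · rw [if_pos ((pair_le a b d).mpr h), if_pos h, coeff_S, pair_sub0, pair_sub1]
  · rw [if_neg (fun hc => h ((pair_le a b d).mp hc)), if_neg h]

private lemma SA :
    S * ((1 - 2 * (MvPowerSeries.X 0 * MvPowerSeries.X 1)) *
      (1 - MvPowerSeries.X 0 - MvPowerSeries.X 1) : MvPowerSeries (Fin 2) ℚ) = 1 := by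
  apply MvPowerSeries.ext
  intro d
  rw [hA, mul_add, mul_add, mul_sub, mul_sub, mul_sub]
  rw [map_add, map_add, map_sub, map_sub, map_sub]
  rw [coeff_S_mul_M, coeff_S_mul_M, coeff_S_mul_M, coeff_S_mul_M, coeff_S_mul_M,
    coeff_S_mul_M, MvPowerSeries.coeff_one]
  have c1 : (if 0 ≤ d 0 ∧ 0 ≤ d 1 then gg (d 0 - 0) (d 1 - 0) * 1 else 0) = gg (d 0) (d 1) := by
    simp
  have c2 : (if 1 ≤ d 0 ∧ 0 ≤ d 1 then gg (d 0 - 1) (d 1 - 0) * 1 else 0)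
      = (if 1 ≤ d 0 then gg (d 0 - 1) (d 1) else 0) := by
    by_cases h : 1 ≤ d 0 <;> simp [h]
  have c3 : (if 0 ≤ d 0 ∧ 1 ≤ d 1 then gg (d 0 - 0) (d 1 - 1) * 1 else 0)
      = (if 1 ≤ d 1 then gg (d 0) (d 1 - 1) else 0) := by
    by_cases h : 1 ≤ d 1 <;> simp [h]
  have c4 : (if 1 ≤ d 0 ∧ 1 ≤ d 1 then gg (d 0 - 1) (d 1 - 1) * 2 else 0)
      = 2 * (if 1 ≤ d 0 ∧ 1 ≤ d 1 then gg (d 0 - 1) (d 1 - 1) else 0) := by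
    by_cases h : 1 ≤ d 0 ∧ 1 ≤ d 1 <;> simp [h, mul_comm]
  have c5 : (if 2 ≤ d 0 ∧ 1 ≤ d 1 then gg (d 0 - 2) (d 1 - 1) * 2 else 0)
      = 2 * (if 2 ≤ d 0 ∧ 1 ≤ d 1 then gg (d 0 - 2) (d 1 - 1) else 0) := by
    by_cases h : 2 ≤ d 0 ∧ 1 ≤ d 1 <;> simp [h, mul_comm]
  have c6 : (if 1 ≤ d 0 ∧ 2 ≤ d 1 then gg (d 0 - 1) (d 1 - 2) * 2 else 0)
      = 2 * (if 1 ≤ d 0 ∧ 2 ≤ d 1 then gg (d 0 - 1) (d 1 - 2) else 0) := by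
    by_cases h : 1 ≤ d 0 ∧ 2 ≤ d 1 <;> simp [h, mul_comm]
  rw [c1, c2, c3, c4, c5, c6]
  have hd : (d = 0) ↔ (d 0 = 0 ∧ d 1 = 0) := by
    constructor
    · rintro rfl; simp
    · rintro ⟨h1, h2⟩
      ext i
      fin_cases i <;> simpa
  rw [if_congr hd rfl rfl]
  exact key (d 0) (d 1)

/-- The square symmetrization of `(1/((1-2x)√(1-4x)), x·c(x))`, whose entries are
`t(n,k) = ∑_{j=0}^{n-k} 2^{n-j-k}·C(k+2j, j)`, has bivariate generating function
`1/((1-2xy)(1-x-y))`. -/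
theorem square_symmetrization_R2 :
    ∀ n k : ℕ,
      (let t : ℕ → ℕ → ℚ := fun n k => ∑ j ∈ Finset.range (n - k + 1),
        (2 : ℚ) ^ (n - j - k) * (Nat.choose (k + 2 * j) j : ℚ)
       if k ≤ n then t n (n - k) else t k (k - n)) =
      MvPowerSeries.coeff (Finsupp.single 0 n + Finsupp.single 1 k)
        (((1 - 2 * (MvPowerSeries.X 0 * MvPowerSeries.X 1)) *
          (1 - MvPowerSeries.X 0 - MvPowerSeries.X 1) : MvPowerSeries (Fin 2) ℚ))⁻¹ := by
  intro n k
  have hc : (MvPowerSeries.constantCoeff (σ := Fin 2) (R := ℚ)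
      ((1 - 2 * (MvPowerSeries.X 0 * MvPowerSeries.X 1)) *
        (1 - MvPowerSeries.X 0 - MvPowerSeries.X 1))) ≠ 0 := by
    simp [MvPowerSeries.constantCoeff_X]
  have hinv : (((1 - 2 * (MvPowerSeries.X 0 * MvPowerSeries.X 1)) *
      (1 - MvPowerSeries.X 0 - MvPowerSeries.X 1) : MvPowerSeries (Fin 2) ℚ))⁻¹ = S :=
    (MvPowerSeries.inv_eq_iff_mul_eq_one hc).mpr SA
  rw [hinv, coeff_S]
  have h0 : ((Finsupp.single 0 n + Finsupp.single 1 k : Fin 2 →₀ ℕ)) 0 = n := by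
    simp [Finsupp.single_apply]
  have h1 : ((Finsupp.single 0 n + Finsupp.single 1 k : Fin 2 →₀ ℕ)) 1 = k := by
    simp [Finsupp.single_apply]
  rw [h0, h1]
  dsimp only
  unfold gg
  by_cases h : k ≤ n
  · rw [if_pos h, if_pos h, ff]
    have hnk : n - (n - k) = k := by omega
    rw [hnk]
    apply Finset.sum_congr rfl
    intro j hj
    rw [Finset.mem_range] at hj
    have : n - j - (n - k) = k - j := by omega
    rw [this]
  · rw [if_neg h, if_neg h, ff]
    have hkn : k - (k - n) = n := by omega
    rw [hkn]
    apply Finset.sum_congr rfl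
    intro j hj
    rw [Finset.mem_range] at hj
    have : k - j - (k - n) = n - j := by omega
    rw [this]
end

section
/- Let M be the (n+1)×(n+1) matrix with entries M(i,j) = binomial(i+j, j) - δ_{i,j+1} (Kronecker delta), 0 ≤ i,j ≤ n. Let S be the matrix with entries given by the coefficients of 1/((1-xy)(1-x-y)), i.e., S(i,j) = ∑_{m=0}^{min(i,j)} binomial(i+j-2m, i-m). Then det M = det S for every n. -/
/-!
The generating function of `M` is `1/(1 - x - y) - x/(1 - x y) = (1 - x + x²)/((1 - x y)(1 - x - y))`,
so `M = L S`, where `L` is the lower unitriangular Toeplitz matrix of `1 - x + x²` acting on the row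
index. Hence `det M = det L · det S = det S`.
-/

open Finset

def robbinsS (i j : ℕ) : ℤ :=
  ∑ m ∈ range (min i j + 1), (Nat.choose (i + j - 2 * m) (i - m) : ℤ)

@[simp]
lemma robbinsS_zero_left (j : ℕ) : robbinsS 0 j = 1 := by
  simp [robbinsS]

@[simp]
lemma robbinsS_zero_right (i : ℕ) : robbinsS i 0 = 1 := by
  simp [robbinsS]

lemma robbinsS_succ_succ (i j : ℕ) :
    robbinsS (i + 1) (j + 1) = Nat.choose (i + j + 2) (j + 1) + robbinsS i j := by
  rw [robbinsS, Nat.add_min_add_right, sum_range_succ', robbinsS, add_comm]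
  congr 1
  · rw [Nat.mul_zero, Nat.sub_zero, Nat.sub_zero, Nat.choose_symm_add]
    congr 2; omega
  · refine sum_congr rfl fun m _ => ?_
    congr 2 <;> omega

/-- The coefficients of `(1 - x + x²) ∑ f i xⁱ`. -/
def mulOneSubXAddXSq {G : Type*} [AddGroup G] (f : ℕ → G) : ℕ → G
  | 0 => f 0
  | 1 => f 1 - f 0
  | i + 2 => f (i + 2) - f (i + 1) + f i

lemma mulOneSubXAddXSq_robbinsS (i j : ℕ) :
    mulOneSubXAddXSq (robbinsS · j) i = Nat.choose (i + j) j - if i = j + 1 then 1 else 0 := by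
  induction j generalizing i with
  | zero => rcases i with _ | _ | i <;> simp [mulOneSubXAddXSq]
  | succ j ih =>
    have pascal (a : ℕ) : ((a + j + 2).choose (j + 1) : ℤ) =
        (a + j + 1).choose j + (a + j + 1).choose (j + 1) := by
      exact_mod_cast Nat.choose_succ_succ' (a + j + 1) j
    rcases i with _ | _ | _ | i
    · simp [mulOneSubXAddXSq]
    · simp only [mulOneSubXAddXSq, robbinsS_succ_succ, robbinsS_zero_left]
      simp [add_comm 1, Nat.choose_succ_self_right]
    · have h1 := ih 1
      have h2 := pascal 0
      simp only [mulOneSubXAddXSq, robbinsS_succ_succ, robbinsS_zero_left, add_left_inj,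
        zero_add, Nat.choose_self, Nat.cast_one] at h1 h2 ⊢
      ring_nf at h1 h2 ⊢
      linarith
    · have h1 := ih (i + 2)
      have h2 := pascal (i + 1)
      simp only [mulOneSubXAddXSq, robbinsS_succ_succ, add_left_inj] at h1 ⊢
      simp only [show i + 2 = j + 1 ↔ i + 1 = j by omega] at h1
      ring_nf at h1 h2 ⊢
      linarith

section Transfer

variable (R : Type*) [Ring R]

def transferCoeff (i k : ℕ) : R :=
  (if k = i then 1 else 0) - (if k + 1 = i then 1 else 0) + (if k + 2 = i then 1 else 0)

def transferMatrix (n : ℕ) : Matrix (Fin n) (Fin n) R :=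
  Matrix.of fun i k => transferCoeff R i k

variable {R}

lemma sum_transferCoeff_mul (f : ℕ → R) {n i : ℕ} (hi : i < n) :
    ∑ k ∈ range n, transferCoeff R i k * f k = mulOneSubXAddXSq f i := by
  have hlt : ∀ k ≤ i, k < n := fun k hk => by omega
  rcases i with _ | _ | i <;>
    simp [transferCoeff, mulOneSubXAddXSq, add_mul, sub_mul, sum_add_distrib, sum_sub_distrib,
      hlt, le_add_right]

lemma transferMatrix_mul_of_apply (f : ℕ → ℕ → R) {n : ℕ} (i j : Fin n) :
    (transferMatrix R n * Matrix.of fun i j : Fin n => f i j) i j = mulOneSubXAddXSq (f · j) i := by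
  rw [Matrix.mul_apply, ← sum_transferCoeff_mul _ i.isLt]
  exact Fin.sum_univ_eq_sum_range (fun k => transferCoeff R i k * f k j) n

end Transfer

lemma det_transferMatrix {R : Type*} [CommRing R] (n : ℕ) : (transferMatrix R n).det = 1 := by
  rw [Matrix.det_of_isLowerTriangular]
  · simp [transferMatrix, transferCoeff]
  · intro i k (hik : (i : ℕ) < k)
    simp [transferMatrix, transferCoeff, hik.ne', show (k : ℕ) + 1 ≠ i by omega,
      show (k : ℕ) + 2 ≠ i by omega]

/-- Let `M(i,j) = C(i+j, j) - δ_{i,j+1}` and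
`S(i,j) = ∑_{m=0}^{min(i,j)} C(i+j-2m, i-m)` (the coefficients of `1/((1-xy)(1-x-y))`),
as `(n+1)×(n+1)` integer matrices. Then `det M = det S` for every `n`. -/
theorem robbins_determinant_transfer (n : ℕ) :
    Matrix.det (Matrix.of fun i j : Fin (n + 1) =>
        (Nat.choose ((i : ℕ) + (j : ℕ)) (j : ℕ) : ℤ) -
          (if (i : ℕ) = (j : ℕ) + 1 then 1 else 0)) =
      Matrix.det (Matrix.of fun i j : Fin (n + 1) =>
        ∑ m ∈ Finset.range (min (i : ℕ) (j : ℕ) + 1),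
          (Nat.choose ((i : ℕ) + (j : ℕ) - 2 * m) ((i : ℕ) - m) : ℤ)) := by
  have hM : (Matrix.of fun i j : Fin (n + 1) =>
      (Nat.choose ((i : ℕ) + (j : ℕ)) (j : ℕ) : ℤ) - (if (i : ℕ) = (j : ℕ) + 1 then 1 else 0)) =
      transferMatrix ℤ (n + 1) * Matrix.of fun i j : Fin (n + 1) => robbinsS i j := by
    ext i j
    rw [transferMatrix_mul_of_apply robbinsS, mulOneSubXAddXSq_robbinsS]
    rfl
  rw [hM, Matrix.det_mul, det_transferMatrix, one_mul]
  rfl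
end

section
/- The generating function of the symmetrization of the Riordan array (1/((1-x)·sqrt(1-2(r+2)x+r^2x^2)), (1-rx-sqrt(1-2(r+2)x+r^2x^2))/2) is 1/((1-xy)(1-x-y-rxy)), for each natural number r. -/
open PowerSeries

def Tz (t : ℕ → ℕ → ℚ) (n m : ℤ) : ℚ :=
  if 0 ≤ n ∧ 0 ≤ m then t n.toNat m.toNat else 0

def Sz (t : ℕ → ℕ → ℚ) (n k : ℤ) : ℚ :=
  if k ≤ n then Tz t n (n - k) else Tz t k (k - n)

lemma Tz_nat (t : ℕ → ℕ → ℚ) (a b : ℕ) : Tz t a b = t a b := by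
  rw [Tz, if_pos (by omega)]; congr 1 <;> omega

lemma Tz_eqn (t : ℕ → ℕ → ℚ) (n m : ℤ) (a b : ℕ) (h1 : n = a) (h2 : m = b) :
    Tz t n m = t a b := by subst h1 h2; exact Tz_nat t a b

lemma Tz_neg_left (t : ℕ → ℕ → ℚ) (n m : ℤ) (h : n < 0) : Tz t n m = 0 := by
  rw [Tz, if_neg (by omega)]

lemma Tz_van (t : ℕ → ℕ → ℚ) (hvan : ∀ n m : ℕ, n < m → t n m = 0)
    (n m : ℤ) (h : n < m) : Tz t n m = 0 := by
  rw [Tz]; split_ifs with hc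
  · exact hvan _ _ (by omega)
  · rfl

lemma Tz_rec (r : ℚ) (t : ℕ → ℕ → ℚ)
    (hvan : ∀ n m : ℕ, n < m → t n m = 0)
    (htr : ∀ n m : ℕ, t (n+1) (m+1) = t n m + r * t n (m+1) + t (n+1) (m+2))
    (n m : ℤ) (hm : 1 ≤ m) :
    Tz t n m = Tz t (n-1) (m-1) + r * Tz t (n-1) m + Tz t n (m+1) := by
  rcases lt_or_ge n 1 with hn | hn
  · rcases lt_or_ge n 0 with hn0 | hn0
    · rw [Tz_neg_left t n m hn0, Tz_neg_left t _ _ (by omega),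
        Tz_neg_left t _ _ (by omega), Tz_neg_left t n _ hn0]
      ring
    · have hn' : n = 0 := by omega
      subst hn'
      rw [Tz_van t hvan 0 m (by omega), Tz_neg_left t _ _ (by omega),
        Tz_neg_left t _ _ (by omega), Tz_van t hvan 0 (m+1) (by omega)]
      ring
  · obtain ⟨a, ha⟩ : ∃ a : ℕ, n = (a : ℤ) + 1 := ⟨(n-1).toNat, by omega⟩
    obtain ⟨b, hb⟩ : ∃ b : ℕ, m = (b : ℤ) + 1 := ⟨(m-1).toNat, by omega⟩
    subst ha hb
    rw [Tz_eqn t _ _ (a+1) (b+1) (by push_cast; ring) (by push_cast; ring),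
      Tz_eqn t _ _ a b (by push_cast; ring) (by push_cast; ring),
      Tz_eqn t _ _ a (b+1) (by push_cast; ring) (by push_cast; ring),
      Tz_eqn t _ _ (a+1) (b+2) (by push_cast; ring) (by push_cast; ring)]
    exact htr a b

lemma Tz_g (r : ℚ) (t : ℕ → ℕ → ℚ)
    (htg1 : t 1 0 = (r+1) * t 0 0 + 2 * t 1 1 - 2 * t 0 1)
    (htg : ∀ n : ℕ, t (n+2) 0 = (r+1) * t (n+1) 0 + 2 * t (n+2) 1 - 2 * t (n+1) 1 - r * t n 0)
    (n : ℤ) (hn : 1 ≤ n) :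
    Tz t n 0 = (r+1) * Tz t (n-1) 0 + 2 * Tz t n 1 - 2 * Tz t (n-1) 1 - r * Tz t (n-2) 0 := by
  rcases lt_or_ge n 2 with h2 | h2
  · have hn1 : n = 1 := by omega
    subst hn1
    rw [Tz_eqn t 1 0 1 0 (by norm_num) (by norm_num),
      Tz_eqn t (1-1) 0 0 0 (by norm_num) (by norm_num),
      Tz_eqn t 1 1 1 1 (by norm_num) (by norm_num),
      Tz_eqn t (1-1) 1 0 1 (by norm_num) (by norm_num),
      Tz_neg_left t (1-2) 0 (by norm_num)]
    linear_combination htg1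
  · obtain ⟨a, rfl⟩ : ∃ a : ℕ, n = (a : ℤ) + 2 := ⟨(n-2).toNat, by omega⟩
    rw [Tz_eqn t ((a:ℤ)+2) 0 (a+2) 0 (by push_cast; ring) (by norm_num),
      Tz_eqn t ((a:ℤ)+2-1) 0 (a+1) 0 (by push_cast; ring) (by norm_num),
      Tz_eqn t ((a:ℤ)+2) 1 (a+2) 1 (by push_cast; ring) (by norm_num),
      Tz_eqn t ((a:ℤ)+2-1) 1 (a+1) 1 (by push_cast; ring) (by norm_num),
      Tz_eqn t ((a:ℤ)+2-2) 0 a 0 (by push_cast; ring) (by norm_num)]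
    exact htg a

lemma Sz_le (t : ℕ → ℕ → ℚ) (a b : ℤ) (h : b ≤ a) : Sz t a b = Tz t a (a - b) := if_pos h

lemma Sz_gt (t : ℕ → ℕ → ℚ) (a b : ℤ) (h : a < b) : Sz t a b = Tz t b (b - a) :=
  if_neg (by omega)

lemma Sz_symm (t : ℕ → ℕ → ℚ) (n k : ℤ) : Sz t n k = Sz t k n := by
  rcases lt_trichotomy n k with h | h | h
  · rw [Sz_gt t n k h, Sz_le t k n (le_of_lt h)]
  · subst h; rfl
  · rw [Sz_le t n k (le_of_lt h), Sz_gt t k n h]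

lemma Sz_neg_right (t : ℕ → ℕ → ℚ) (hvan : ∀ n m : ℕ, n < m → t n m = 0)
    (n k : ℤ) (h : k < 0) : Sz t n k = 0 := by
  rw [Sz]
  split_ifs with hc
  · rcases lt_or_ge n 0 with hn | hn
    · exact Tz_neg_left t _ _ hn
    · exact Tz_van t hvan _ _ (by omega)
  · exact Tz_neg_left t _ _ (by omega)

lemma key_s18 (r : ℚ) (t : ℕ → ℕ → ℚ)
    (ht00 : t 0 0 = 1)
    (hvan : ∀ n m : ℕ, n < m → t n m = 0)
    (htr : ∀ n m : ℕ, t (n+1) (m+1) = t n m + r * t n (m+1) + t (n+1) (m+2))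
    (htg1 : t 1 0 = (r+1) * t 0 0 + 2 * t 1 1 - 2 * t 0 1)
    (htg : ∀ n : ℕ, t (n+2) 0 = (r+1) * t (n+1) 0 + 2 * t (n+2) 1 - 2 * t (n+1) 1 - r * t n 0) :
    ∀ n k : ℤ, Sz t n k - Sz t (n-1) k - Sz t n (k-1) - (r+1) * Sz t (n-1) (k-1)
      + Sz t (n-2) (k-1) + Sz t (n-1) (k-2) + r * Sz t (n-2) (k-2)
      = if n = 0 ∧ k = 0 then 1 else 0 := by
  suffices H : ∀ n k : ℤ, k ≤ n →
      Sz t n k - Sz t (n-1) k - Sz t n (k-1) - (r+1) * Sz t (n-1) (k-1)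
      + Sz t (n-2) (k-1) + Sz t (n-1) (k-2) + r * Sz t (n-2) (k-2)
      = if n = 0 ∧ k = 0 then 1 else 0 by
    intro n k
    rcases le_total k n with h | h
    · exact H n k h
    · have hkn := H k n h
      rw [Sz_symm t n k, Sz_symm t (n-1) k, Sz_symm t n (k-1), Sz_symm t (n-1) (k-1),
        Sz_symm t (n-2) (k-1), Sz_symm t (n-1) (k-2), Sz_symm t (n-2) (k-2)]
      have hδ : (if k = 0 ∧ n = 0 then (1:ℚ) else 0) = (if n = 0 ∧ k = 0 then 1 else 0) := by
        by_cases h1 : n = 0 <;> by_cases h2 : k = 0 <;> simp [h1, h2]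
      rw [← hδ]
      linear_combination hkn
  intro n k hkn
  rcases lt_or_ge k 0 with hk | hk
  · rw [Sz_neg_right t hvan n k hk, Sz_neg_right t hvan (n-1) k hk,
      Sz_neg_right t hvan n (k-1) (by omega), Sz_neg_right t hvan (n-1) (k-1) (by omega),
      Sz_neg_right t hvan (n-2) (k-1) (by omega), Sz_neg_right t hvan (n-1) (k-2) (by omega),
      Sz_neg_right t hvan (n-2) (k-2) (by omega), if_neg (by omega)]
    ring
  rcases eq_or_lt_of_le hkn with heq | hlt
  · -- n = k
    obtain rfl : n = k := heq.symm
    rw [Sz_le t n n le_rfl, Sz_gt t (n-1) n (by omega), Sz_le t n (n-1) (by omega),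
      Sz_le t (n-1) (n-1) le_rfl, Sz_gt t (n-2) (n-1) (by omega),
      Sz_le t (n-1) (n-2) (by omega), Sz_le t (n-2) (n-2) le_rfl,
      show n - n = (0:ℤ) from by ring, show n - (n-1) = (1:ℤ) from by ring,
      show n - 1 - (n-1) = (0:ℤ) from by ring, show n - 1 - (n-2) = (1:ℤ) from by ring,
      show n - 2 - (n-2) = (0:ℤ) from by ring]
    rcases eq_or_lt_of_le hk with h0 | h0
    · rw [← h0]
      rw [Tz_eqn t 0 0 0 0 (by norm_num) (by norm_num),
        Tz_neg_left t (0-1) 1 (by norm_num), Tz_neg_left t (0-1) 0 (by norm_num),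
        Tz_neg_left t (0-2) 0 (by norm_num), Tz_van t hvan 0 1 (by norm_num),
        if_pos ⟨rfl, rfl⟩, ht00]
      ring
    · rw [if_neg (by omega)]
      linear_combination Tz_g r t htg1 htg n (by omega)
  rcases eq_or_lt_of_le (by omega : k + 1 ≤ n) with heq | hlt2
  · -- n = k + 1
    have h1 := Tz_rec r t hvan htr n 1 (by norm_num)
    have h2 := Tz_rec r t hvan htr (n-1) 1 (by norm_num)
    rw [show (1:ℤ) - 1 = 0 from by norm_num, show (1:ℤ) + 1 = 2 from by norm_num] at h1 h2
    rw [show n - 1 - 1 = n - 2 from by ring] at h2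
    rw [Sz_le t n k (by omega), Sz_le t (n-1) k (by omega), Sz_le t n (k-1) (by omega),
      Sz_le t (n-1) (k-1) (by omega), Sz_le t (n-2) (k-1) (by omega),
      Sz_le t (n-1) (k-2) (by omega), Sz_le t (n-2) (k-2) (by omega),
      show n - k = (1:ℤ) from by omega, show n - 1 - k = (0:ℤ) from by omega,
      show n - (k-1) = (2:ℤ) from by omega, show n - 1 - (k-1) = (1:ℤ) from by omega,
      show n - 2 - (k-1) = (0:ℤ) from by omega, show n - 1 - (k-2) = (2:ℤ) from by omega,
      show n - 2 - (k-2) = (1:ℤ) from by omega,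
      if_neg (by omega)]
    linear_combination h1 - h2
  · -- k + 2 ≤ n
    have h1 := Tz_rec r t hvan htr n (n-k) (by omega)
    have h2 := Tz_rec r t hvan htr (n-1) (n-k) (by omega)
    rw [show n - 1 - 1 = n - 2 from by ring] at h2
    rw [Sz_le t n k (by omega), Sz_le t (n-1) k (by omega), Sz_le t n (k-1) (by omega),
      Sz_le t (n-1) (k-1) (by omega), Sz_le t (n-2) (k-1) (by omega),
      Sz_le t (n-1) (k-2) (by omega), Sz_le t (n-2) (k-2) (by omega),
      show n - 1 - k = n - k - 1 from by ring, show n - (k-1) = n - k + 1 from by ring,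
      show n - 1 - (k-1) = n - k from by ring, show n - 2 - (k-1) = n - k - 1 from by ring,
      show n - 1 - (k-2) = n - k + 1 from by ring, show n - 2 - (k-2) = n - k from by ring,
      if_neg (by omega)]
    linear_combination h1 - h2

lemma Sz_neg_left (t : ℕ → ℕ → ℚ) (hvan : ∀ n m : ℕ, n < m → t n m = 0)
    (n k : ℤ) (h : n < 0) : Sz t n k = 0 := by
  rw [Sz_symm]; exact Sz_neg_right t hvan k n h

lemma Sz_natnat (t : ℕ → ℕ → ℚ) (a b : ℕ) :
    Sz t (a:ℤ) (b:ℤ) = if b ≤ a then t a (a-b) else t b (b-a) := by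
  rw [Sz]
  split_ifs with h1 h2 h2
  · exact Tz_eqn t _ _ a (a-b) rfl (by omega)
  · omega
  · omega
  · exact Tz_eqn t _ _ b (b-a) rfl (by omega)

/-- The square symmetrization of the Riordan array
`(1/((1-x)·√(1-2(r+2)x+r²x²)), (1-rx-√(1-2(r+2)x+r²x²))/2)`
has bivariate generating function `1/((1-xy)(1-x-y-rxy))`. -/
theorem square_symmetrization_Rtilde (r : ℕ) (s f : PowerSeries ℚ)
    (hs0 : constantCoeff s = 1)
    (hs : s ^ 2 = 1 - 2 * ((r : ℚ⟦X⟧) + 2) * X + (r : ℚ⟦X⟧) ^ 2 * X ^ 2)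
    (hf : 2 * f = 1 - (r : ℚ⟦X⟧) * X - s) :
    ∀ n k : ℕ,
      (let t : ℕ → ℕ → ℚ := fun n k => (coeff n) (((1 - X) * s)⁻¹ * f ^ k)
       if k ≤ n then t n (n - k) else t k (k - n)) =
      MvPowerSeries.coeff (Finsupp.single 0 n + Finsupp.single 1 k)
        (((1 - MvPowerSeries.X 0 * MvPowerSeries.X 1) *
          (1 - MvPowerSeries.X 0 - MvPowerSeries.X 1 -
            (r : MvPowerSeries (Fin 2) ℚ) * (MvPowerSeries.X 0 * MvPowerSeries.X 1)) :
              MvPowerSeries (Fin 2) ℚ))⁻¹ := by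
  classical
  intro n k
  show (if k ≤ n then coeff n (((1 - X) * s)⁻¹ * f ^ (n - k))
      else coeff k (((1 - X) * s)⁻¹ * f ^ (k - n))) = _
  set g : ℚ⟦X⟧ := ((1 - X) * s)⁻¹ with hg
  have hgu : constantCoeff ((1 - X) * s) = 1 := by
    simp [hs0]
  have hg1 : ((1 - X) * s) * g = 1 :=
    PowerSeries.mul_inv_cancel _ (by rw [hgu]; norm_num)
  have hf0 : constantCoeff f = 0 := by
    have h := congrArg (constantCoeff) hf
    rw [map_mul, map_ofNat, map_sub, map_sub, map_mul, map_one, hs0, constantCoeff_X,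
      mul_zero, sub_zero, sub_self] at h
    linarith
  have hs' : s = 1 - (r : ℚ⟦X⟧) * X - 2 * f := by linear_combination hf
  have hs2 : (1 - (r : ℚ⟦X⟧) * X - 2 * f) ^ 2
      = 1 - 2 * ((r : ℚ⟦X⟧) + 2) * X + (r : ℚ⟦X⟧) ^ 2 * X ^ 2 := by
    rw [← hs']; exact hs
  have h4 : (4 : ℚ⟦X⟧) ≠ 0 := by
    intro h
    have h4' := congrArg (constantCoeff) h
    rw [map_ofNat, map_zero] at h4'
    norm_num at h4' 
  have hfq : f = X + (r : ℚ⟦X⟧) * X * f + f ^ 2 := by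
    apply mul_left_cancel₀ h4
    linear_combination -hs2
  have hrC : (r : ℚ⟦X⟧) = C (r : ℚ) := by
    rw [map_natCast]
  have h2C : (2 : ℚ⟦X⟧) = C (2 : ℚ) := by
    rw [map_ofNat]
  -- series form of the g-equation
  have hgeq : g = 1 + C (r:ℚ) * (X * g) + X * g + C 2 * (g * f)
      - C (r:ℚ) * (X * (X * g)) - C 2 * (X * (g * f)) := by
    linear_combination hg1 - ((1 - X) * g) * hs' + (X * g - X * (X * g)) * hrC
      + (g * f - X * (g * f)) * h2C
  set t : ℕ → ℕ → ℚ := fun n m => coeff n (g * f ^ m) with ht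
  -- constant term
  have ht00 : t 0 0 = 1 := by
    show coeff 0 (g * f ^ 0) = 1
    rw [pow_zero, mul_one, coeff_zero_eq_constantCoeff, hg, PowerSeries.constantCoeff_inv, hgu]
    norm_num
  -- vanishing above the diagonal
  have hvan : ∀ n m : ℕ, n < m → t n m = 0 := by
    intro n m hnm
    have hd : (X : ℚ⟦X⟧) ^ m ∣ g * f ^ m :=
      Dvd.dvd.mul_left (pow_dvd_pow_of_dvd (PowerSeries.X_dvd_iff.mpr hf0) m) g
    exact PowerSeries.X_pow_dvd_iff.mp hd n hnm
  -- the main recurrence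
  have htr : ∀ n m : ℕ, t (n+1) (m+1) = t n m + (r:ℚ) * t n (m+1) + t (n+1) (m+2) := by
    intro n m
    have hser : g * f ^ (m+1)
        = X * (g * f ^ m) + C (r:ℚ) * (X * (g * f ^ (m+1))) + g * f ^ (m+2) := by
      linear_combination (g * f ^ m) * hfq + (X * (g * f ^ (m+1))) * hrC
    show coeff (n+1) (g * f ^ (m+1)) = _
    rw [hser, map_add, map_add, coeff_succ_X_mul, coeff_C_mul, coeff_succ_X_mul]
  -- the g-equation, coefficient 1
  have htg1 : t 1 0 = ((r:ℚ)+1) * t 0 0 + 2 * t 1 1 - 2 * t 0 1 := by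
    have h := congrArg (coeff 1) hgeq
    rw [map_sub, map_sub, map_add, map_add, map_add, coeff_C_mul, coeff_C_mul, coeff_C_mul,
      coeff_C_mul, coeff_succ_X_mul, coeff_succ_X_mul, coeff_succ_X_mul, coeff_one] at h
    have hx0 : coeff 0 (X * g : ℚ⟦X⟧) = 0 := by
      rw [coeff_zero_eq_constantCoeff, map_mul, constantCoeff_X, zero_mul]
    rw [hx0] at h
    show coeff 1 (g * f ^ 0) = _
    rw [pow_zero, mul_one]
    have e0 : t 0 0 = coeff 0 g := by
      show coeff 0 (g * f ^ 0) = _; rw [pow_zero, mul_one]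
    have e1 : t 1 1 = coeff 1 (g * f) := by
      show coeff 1 (g * f ^ 1) = _; rw [pow_one]
    have e2 : t 0 1 = coeff 0 (g * f) := by
      show coeff 0 (g * f ^ 1) = _; rw [pow_one]
    rw [e0, e1, e2]
    rw [h]
    norm_num
    ring
  -- the g-equation, higher coefficients
  have htg : ∀ n : ℕ, t (n+2) 0 = ((r:ℚ)+1) * t (n+1) 0 + 2 * t (n+2) 1
      - 2 * t (n+1) 1 - (r:ℚ) * t n 0 := by
    intro n
    have h := congrArg (coeff (n+2)) hgeq
    rw [map_sub, map_sub, map_add, map_add, map_add, coeff_C_mul, coeff_C_mul, coeff_C_mul,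
      coeff_C_mul, coeff_succ_X_mul, coeff_succ_X_mul, coeff_succ_X_mul, coeff_succ_X_mul,
      coeff_one] at h
    have e0 : ∀ j : ℕ, t j 0 = coeff j g := by
      intro j; show coeff j (g * f ^ 0) = _; rw [pow_zero, mul_one]
    have e1 : ∀ j : ℕ, t j 1 = coeff j (g * f) := by
      intro j; show coeff j (g * f ^ 1) = _; rw [pow_one]
    rw [e0, e0, e0, e1, e1]
    rw [h]
    norm_num
    ring
  have EK := key_s18 (r:ℚ) t ht00 hvan htr htg1 htg
  set B : MvPowerSeries (Fin 2) ℚ := fun e => Sz t (e 0) (e 1) with hB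
  have hBc : ∀ e : Fin 2 →₀ ℕ, MvPowerSeries.coeff e B = Sz t (e 0) (e 1) := fun e => rfl
  set M : ℕ → ℕ → MvPowerSeries (Fin 2) ℚ :=
    fun a b => MvPowerSeries.monomial (Finsupp.single 0 a + Finsupp.single 1 b) 1 with hMdef
  have hM : ∀ a b c d : ℕ, M a b * M c d = M (a+c) (b+d) := by
    intro a b c d
    rw [hMdef]
    simp only [MvPowerSeries.monomial_mul_monomial, one_mul]
    have hd : ((Finsupp.single 0 a + Finsupp.single 1 b) + (Finsupp.single 0 c + Finsupp.single 1 d)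
        : Fin 2 →₀ ℕ) = Finsupp.single 0 (a+c) + Finsupp.single 1 (b+d) := by
      ext i
      simp only [Finsupp.add_apply, Finsupp.single_apply]
      split_ifs <;> omega
    rw [hd]
  have e00 : ∀ (a b : ℕ), ((Finsupp.single 0 a + Finsupp.single 1 b : Fin 2 →₀ ℕ)) 0 = a := by
    intro a b
    rw [Finsupp.add_apply, Finsupp.single_eq_same, Finsupp.single_eq_of_ne (by decide), add_zero]
  have e11 : ∀ (a b : ℕ), ((Finsupp.single 0 a + Finsupp.single 1 b : Fin 2 →₀ ℕ)) 1 = b := by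
    intro a b
    rw [Finsupp.add_apply, Finsupp.single_eq_same, Finsupp.single_eq_of_ne (by decide), zero_add]
  have hx0 : (MvPowerSeries.X 0 : MvPowerSeries (Fin 2) ℚ) = M 1 0 := by
    rw [MvPowerSeries.X_def, hMdef]
    have hd : (Finsupp.single 0 1 + Finsupp.single 1 0 : Fin 2 →₀ ℕ) = Finsupp.single 0 1 := by
      rw [Finsupp.single_zero, add_zero]
    rw [← hd]
  have hx1 : (MvPowerSeries.X 1 : MvPowerSeries (Fin 2) ℚ) = M 0 1 := by
    rw [MvPowerSeries.X_def, hMdef]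
    have hd : (Finsupp.single 0 0 + Finsupp.single 1 1 : Fin 2 →₀ ℕ) = Finsupp.single 1 1 := by
      rw [Finsupp.single_zero, zero_add]
    rw [← hd]
  have hrC : (r : MvPowerSeries (Fin 2) ℚ) = MvPowerSeries.C (r:ℚ) :=
    (map_natCast _ r).symm
  have p11 : M 1 0 * M 0 1 = M 1 1 := by rw [hM]
  have p21 : M 1 1 * M 1 0 = M 2 1 := by rw [hM]
  have p12 : M 1 1 * M 0 1 = M 1 2 := by rw [hM]
  have p22 : M 1 1 * M 1 1 = M 2 2 := by rw [hM]
  have hexp : B * ((1 - MvPowerSeries.X 0 * MvPowerSeries.X 1) *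
          (1 - MvPowerSeries.X 0 - MvPowerSeries.X 1 -
            (r : MvPowerSeries (Fin 2) ℚ) * (MvPowerSeries.X 0 * MvPowerSeries.X 1)))
      = B - B * M 1 0 - B * M 0 1 - MvPowerSeries.C (r:ℚ) * (B * M 1 1) - B * M 1 1
        + B * M 2 1 + B * M 1 2 + MvPowerSeries.C (r:ℚ) * (B * M 2 2) := by
    rw [← p21, ← p12, ← p22, ← p11, hrC, hx0, hx1]
    ring
  -- coefficient of B * monomial
  have hBM : ∀ (e : Fin 2 →₀ ℕ) (a b : ℕ),
      MvPowerSeries.coeff e (B * M a b) = Sz t ((e 0 : ℤ) - a) ((e 1 : ℤ) - b) := by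
    intro e a b
    rw [hMdef]
    rw [MvPowerSeries.coeff_mul_monomial]
    split_ifs with hle
    · rw [mul_one, hBc]
      have h0 : ((e - (Finsupp.single 0 a + Finsupp.single 1 b) : Fin 2 →₀ ℕ) 0) = e 0 - a := by
        rw [Finsupp.tsub_apply, e00]
      have h1 : ((e - (Finsupp.single 0 a + Finsupp.single 1 b) : Fin 2 →₀ ℕ) 1) = e 1 - b := by
        rw [Finsupp.tsub_apply, e11]
      have ha : a ≤ e 0 := by
        have := hle 0; rwa [e00] at this
      have hb : b ≤ e 1 := by
        have := hle 1; rwa [e11] at this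
      rw [h0, h1]
      congr 1 <;> omega
    · rw [Finsupp.le_def, Fin.forall_fin_two, e00, e11] at hle
      by_cases ha : a ≤ e 0
      · have hb : ¬ b ≤ e 1 := fun hb => hle ⟨ha, hb⟩
        rw [Sz_neg_right t hvan _ _ (by omega)]
      · rw [Sz_neg_left t hvan _ _ (by omega)]
  have hPc : MvPowerSeries.constantCoeff
      ((1 - MvPowerSeries.X 0 * MvPowerSeries.X 1) *
          (1 - MvPowerSeries.X 0 - MvPowerSeries.X 1 -
            (r : MvPowerSeries (Fin 2) ℚ) * (MvPowerSeries.X 0 * MvPowerSeries.X 1))) ≠ 0 := by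
    simp [MvPowerSeries.constantCoeff_X]
  have hprod : B * ((1 - MvPowerSeries.X 0 * MvPowerSeries.X 1) *
          (1 - MvPowerSeries.X 0 - MvPowerSeries.X 1 -
            (r : MvPowerSeries (Fin 2) ℚ) * (MvPowerSeries.X 0 * MvPowerSeries.X 1))) = 1 := by
    apply MvPowerSeries.ext
    intro e
    rw [hexp, MvPowerSeries.coeff_one]
    simp only [map_add, map_sub, MvPowerSeries.coeff_C_mul]
    rw [hBM e 1 0, hBM e 0 1, hBM e 1 1, hBM e 2 1, hBM e 1 2, hBM e 2 2, hBc]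
    have he0 : (e = 0) ↔ (((e 0 : ℕ) : ℤ) = 0 ∧ ((e 1 : ℕ) : ℤ) = 0) := by
      rw [Finsupp.ext_iff, Fin.forall_fin_two]
      simp
    have := EK (e 0 : ℤ) (e 1 : ℤ)
    by_cases h : e = 0
    · rw [if_pos h, if_pos (he0.mp h)] at *
      simp only [Nat.cast_one, Nat.cast_zero, Nat.cast_ofNat, sub_zero]
      linear_combination this
    · rw [if_neg h, if_neg (fun hc => h (he0.mpr hc))] at *
      simp only [Nat.cast_one, Nat.cast_zero, Nat.cast_ofNat, sub_zero]
      linear_combination this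
  have hBinv : B = (((1 - MvPowerSeries.X 0 * MvPowerSeries.X 1) *
          (1 - MvPowerSeries.X 0 - MvPowerSeries.X 1 -
            (r : MvPowerSeries (Fin 2) ℚ) * (MvPowerSeries.X 0 * MvPowerSeries.X 1)) :
              MvPowerSeries (Fin 2) ℚ))⁻¹ :=
    (MvPowerSeries.eq_inv_iff_mul_eq_one hPc).mpr hprod
  rw [← hBinv, hBc, e00, e11, Sz_natnat]
end

section
/- For each natural number r, the compositional inverse of f_r(x) = (1-rx-sqrt(1-2(r+2)x+r^2x^2))/2 is x(1-x)/(1+rx); that is, f_r(x(1-x)/(1+rx)) = x as formal power series. -/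
open PowerSeries

/-- The compositional inverse of `f_r(x) = (1-rx-√(1-2(r+2)x+r²x²))/2` is `x(1-x)/(1+rx)`:
evaluating `f_r` at `u = x(1-x)/(1+rx)` gives `x`, i.e. `1 - r·u - √(1-2(r+2)u+r²u²) = 2x`. -/
theorem f_r_comp_inverse (r : ℕ) (u s : PowerSeries ℚ)
    (hu : u = X * (1 - X) * (1 + (r : ℚ⟦X⟧) * X)⁻¹)
    (hs0 : constantCoeff s = 1)
    (hs : s ^ 2 = 1 - 2 * ((r : ℚ⟦X⟧) + 2) * u + (r : ℚ⟦X⟧) ^ 2 * u ^ 2) :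
    1 - (r : ℚ⟦X⟧) * u - s = 2 * X := by
  have h1 : constantCoeff (1 + (r : ℚ⟦X⟧) * X) ≠ 0 := by simp
  have key : u * (1 + (r : ℚ⟦X⟧) * X) = X * (1 - X) := by
    rw [hu, mul_assoc, PowerSeries.inv_mul_cancel _ h1, mul_one]
  set t : ℚ⟦X⟧ := 1 - (r : ℚ⟦X⟧) * u - 2 * X with ht
  have hu0 : constantCoeff u = 0 := by rw [hu]; simp
  have hsq : s ^ 2 = t ^ 2 := by
    rw [hs, ht]; linear_combination (-4 : ℚ⟦X⟧) * key
  have hfac : (s - t) * (s + t) = 0 := by ring_nf; linear_combination hsq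
  have hst : s + t ≠ 0 := by
    intro h
    have := congrArg (constantCoeff) h
    simp [ht, hs0, hu0] at this
  have : s - t = 0 := by
    rcases mul_eq_zero.mp hfac with h | h
    · exact h
    · exact absurd h hst
  have hseq : s = t := sub_eq_zero.mp this
  rw [hseq, ht]; ring
end
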